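/- arXiv:0910.2737 — 5 statements merged into one kernel-verified Lean document; each statement's English description precedes it below -/
import Mathlib

section
/- Let P be the partial order [n] ⊕ [m] (disjoint sum of the linear orders [n] and [m]) and let L be the linear order [n]^op ◁ [m] (concatenation of the reversed order on [n] followed by [m]), both on the same underlying set. For a fixed-point free involution f on this set, the following are equivalent: (1) f satisfies (PL1) and (PL2) with respect to P; (2) f satisfies (PL1) with respect to L. -/
open Sum Relation

/-- A fixed-point free involution. -/
def FPF {X : Type*} (f : X → X) : Prop :=
  Function.Involutive f ∧ ∀ x, f x ≠ x

/-- Condition (PL1) for `f` with respect to the order on `X`: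
if `i < j < f i` then `i < f j < f i`. -/
def PL1 {X : Type*} [Preorder X] (f : X → X) : Prop :=
  ∀ i j, i < j → j < f i → i < f j ∧ f j < f i

/-- Incomparability `x # y`. -/
def Incomp {X : Type*} [Preorder X] (x y : X) : Prop :=
  ¬ (x ≤ y) ∧ ¬ (y ≤ x)

/-- Condition (PL2): if `f i # i`, `i < j` and `j # f j` then `f i < f j`. -/
def PL2 {X : Type*} [Preorder X] (f : X → X) : Prop :=
  ∀ i j, Incomp (f i) i → i < j → Incomp j (f j) → f i < f j

/-- A planar involution on `[n] ⊕ [m]` (with the disjoint-sum partial order):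
a fixed-point free involution satisfying (PL1) and (PL2).  These are the
elements of `P(n, m)`. -/
def Planar {n m : ℕ} (f : Fin n ⊕ Fin m → Fin n ⊕ Fin m) : Prop :=
  FPF f ∧ PL1 f ∧ PL2 f

/-- The strict order of the linear order `[n]ᵒᵖ ◁ [m]`: the reversed order on
`[n]`, concatenated below `[m]`. -/
def Llt (n m : ℕ) : Fin n ⊕ Fin m → Fin n ⊕ Fin m → Prop
  | Sum.inl i, Sum.inl j => j < i
  | Sum.inl _, Sum.inr _ => True
  | Sum.inr _, Sum.inl _ => False
  | Sum.inr i, Sum.inr j => i < j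

/-- Condition (PL1) with respect to an arbitrary strict order relation. -/
def PL1Rel {X : Type*} (lt : X → X → Prop) (f : X → X) : Prop :=
  ∀ i j, lt i j → lt j (f i) → lt i (f j) ∧ lt (f j) (f i)

/-- For a fixed-point free involution `f` on the common underlying set of the
partial order `[n] ⊕ [m]` and the linear order `[n]ᵒᵖ ◁ [m]`, the following
are equivalent: (1) `f` satisfies (PL1) and (PL2) w.r.t. `[n] ⊕ [m]`;
(2) `f` satisfies (PL1) w.r.t. `[n]ᵒᵖ ◁ [m]`. -/
theorem stmt_4 (n m : ℕ) (f : Fin n ⊕ Fin m → Fin n ⊕ Fin m) (hf : FPF f) :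
    (PL1 f ∧ PL2 f) ↔ PL1Rel (Llt n m) f := by
  obtain ⟨hinv, hne⟩ := hf
  constructor
  · rintro ⟨h1, h2⟩ x y hxy hyfx
    rcases x with a | a <;> rcases y with b | b <;> simp only [Llt] at hxy
    · -- x = inl a, y = inl b, b < a
      rcases hfx : f (Sum.inl a) with c | c <;> rw [hfx] at hyfx <;>
        simp only [Llt] at hyfx
      · -- f x = inl c, c < b
        have hfc : f (Sum.inl c) = Sum.inl a := by rw [← hfx, hinv]
        have key := h1 (Sum.inl c) (Sum.inl b) (by simp [hyfx])
          (by rw [hfc]; simp [hxy])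
        obtain ⟨k1, k2⟩ := key
        rw [hfc] at k2
        rcases hfy : f (Sum.inl b) with d | d <;> rw [hfy] at k1 k2 <;>
          simp at k1 k2
        simp only [Llt]
        exact ⟨k2, k1⟩
      · -- f x = inr c (cross arc at inl a)
        rcases hfy : f (Sum.inl b) with d | d
        · -- f y = inl d; need d < a
          simp only [Llt, and_true]
          have hfd : f (Sum.inl d) = Sum.inl b := by rw [← hfy, hinv]
          rcases lt_trichotomy d a with h | h | h
          · exact h
          · exfalso
            rw [h, hfx] at hfd
            exact absurd hfd (by simp)
          · exfalso
            have key := h1 (Sum.inl b) (Sum.inl a) (by simp [hxy])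
              (by rw [hfy]; simp [h])
            rw [hfx] at key
            exact absurd key.1 (by simp)
        · -- f y = inr d; use PL2
          have key := h2 (Sum.inl b) (Sum.inl a) (by rw [hfy]; simp [Incomp])
            (by simp [hxy]) (by rw [hfx]; simp [Incomp])
          rw [hfx, hfy] at key
          simp at key
          simp only [Llt]
          exact ⟨trivial, key⟩
    · -- x = inl a, y = inr b
      rcases hfx : f (Sum.inl a) with c | c <;> rw [hfx] at hyfx <;>
        simp only [Llt] at hyfx
      -- f x = inr c, b < c
      rcases hfy : f (Sum.inr b) with d | d
      · -- f y = inl d; need d < a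
        simp only [Llt, and_true]
        have hfd : f (Sum.inl d) = Sum.inr b := by rw [← hfy, hinv]
        rcases lt_trichotomy d a with h | h | h
        · exact h
        · exfalso
          rw [h, hfx] at hfd
          simp at hfd
          omega
        · exfalso
          have key := h2 (Sum.inl a) (Sum.inl d) (by rw [hfx]; simp [Incomp])
            (by simp [h]) (by rw [hfd]; simp [Incomp])
          rw [hfx, hfd] at key
          simp at key
          omega
      · -- f y = inr d; need d < c
        simp only [Llt, true_and]
        have hfd : f (Sum.inr d) = Sum.inr b := by rw [← hfy, hinv]
        have hfc : f (Sum.inr c) = Sum.inl a := by rw [← hfx, hinv]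
        rcases lt_trichotomy d c with h | h | h
        · exact h
        · exfalso
          rw [h, hfc] at hfd
          simp at hfd
        · exfalso
          have key := h1 (Sum.inr b) (Sum.inr c) (by simp [hyfx])
            (by rw [hfy]; simp [h])
          rw [hfc] at key
          exact absurd key.1 (by simp)
    · -- x = inr a, y = inr b, a < b
      rcases hfx : f (Sum.inr a) with c | c <;> rw [hfx] at hyfx <;>
        simp only [Llt] at hyfx
      have key := h1 (Sum.inr a) (Sum.inr b) (by simp [hxy])
        (by rw [hfx]; simp [hyfx])
      obtain ⟨k1, k2⟩ := key
      rw [hfx] at k2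
      rcases hfy : f (Sum.inr b) with d | d <;> rw [hfy] at k1 k2 <;>
        simp at k1 k2
      simp only [Llt]
      exact ⟨k1, k2⟩
  · intro hL
    constructor
    · -- PL1
      intro x y hxy hyfx
      rcases x with a | a <;> rcases y with b | b <;> simp at hxy
      · -- inl a < inl b, a < b
        rcases hfx : f (Sum.inl a) with c | c <;> rw [hfx] at hyfx <;>
          simp at hyfx
        -- f x = inl c, b < c
        have hfc : f (Sum.inl c) = Sum.inl a := by rw [← hfx, hinv]
        have key := hL (Sum.inl c) (Sum.inl b) (by simp only [Llt]; exact hyfx)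
          (by rw [hfc]; simp only [Llt]; exact hxy)
        obtain ⟨k1, k2⟩ := key
        rw [hfc] at k2
        rcases hfy : f (Sum.inl b) with d | d <;> rw [hfy] at k1 k2 <;>
          simp only [Llt] at k1 k2
        simp
        exact ⟨k2, k1⟩
      · -- inr a < inr b
        rcases hfx : f (Sum.inr a) with c | c <;> rw [hfx] at hyfx <;>
          simp at hyfx
        have key := hL (Sum.inr a) (Sum.inr b) (by simp only [Llt]; exact hxy)
          (by rw [hfx]; simp only [Llt]; exact hyfx)
        obtain ⟨k1, k2⟩ := key
        rw [hfx] at k2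
        rcases hfy : f (Sum.inr b) with d | d <;> rw [hfy] at k1 k2 <;>
          simp only [Llt] at k1 k2
        simp
        exact ⟨k1, k2⟩
    · -- PL2
      intro x y hix hxy hjy
      rcases x with a | a <;> rcases y with b | b <;> simp at hxy
      · rcases hfx : f (Sum.inl a) with c | c
        · rw [hfx] at hix; simp [Incomp] at hix; omega
        rcases hfy : f (Sum.inl b) with d | d
        · rw [hfy] at hjy; simp [Incomp] at hjy; omega
        have key := hL (Sum.inl b) (Sum.inl a) (by simp only [Llt]; exact hxy)
          (by rw [hfy]; simp [Llt])
        obtain ⟨_, k2⟩ := key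
        rw [hfx, hfy] at k2
        simp only [Llt] at k2
        simp [k2]
      · rcases hfx : f (Sum.inr a) with c | c
        swap
        · rw [hfx] at hix; simp [Incomp] at hix; omega
        rcases hfy : f (Sum.inr b) with d | d
        swap
        · rw [hfy] at hjy; simp [Incomp] at hjy; omega
        have hfd : f (Sum.inl d) = Sum.inr b := by rw [← hfy, hinv]
        have key := hL (Sum.inl d) (Sum.inr a) (by simp [Llt])
          (by rw [hfd]; simpa [Llt] using hxy)
        obtain ⟨k1, _⟩ := key
        rw [hfx] at k1
        simp only [Llt] at k1
        simp [k1]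
end

section
/- If f ∈ P(n, m) and g ∈ P(m, p) are planar involutions, then the relation θ on [n] + [p] defined by the execution formula (θ_{n,n} = f_{n,n} ∪ f_{n,m};g_{m,m};(f_{m,m};g_{m,m})*;f_{m,n}, θ_{n,p} = f_{n,m};(g_{m,m};f_{m,m})*;g_{m,p}, θ_{p,n} = g_{p,m};(f_{m,m};g_{m,m})*;f_{m,n}, θ_{p,p} = g_{p,p} ∪ g_{p,m};f_{m,m};(g_{m,m};f_{m,m})*;g_{m,p}) is a fixed-point free involution on [n] + [p]. -/
open Sum Relation

/-- The graph relation of a function. -/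
def graphRel {X : Type*} (f : X → X) : X → X → Prop := fun x y => f x = y

/-- The execution formula: the Geometry-of-Interaction composite of a relation
`R` on `A ⊕ B` and a relation `S` on `B ⊕ C`, defined componentwise by
`θ_{A,A} = R_{A,A} ∪ R_{A,B};S_{B,B};(R_{B,B};S_{B,B})*;R_{B,A}`,
`θ_{A,C} = R_{A,B};(S_{B,B};R_{B,B})*;S_{B,C}`,
`θ_{C,A} = S_{C,B};(R_{B,B};S_{B,B})*;R_{B,A}`,
`θ_{C,C} = S_{C,C} ∪ S_{C,B};R_{B,B};(S_{B,B};R_{B,B})*;S_{B,C}`. -/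
def ExecR {A B C : Type*} (R : A ⊕ B → A ⊕ B → Prop) (S : B ⊕ C → B ⊕ C → Prop) :
    A ⊕ C → A ⊕ C → Prop :=
  let Raa : A → A → Prop := fun i j => R (Sum.inl i) (Sum.inl j)
  let Rab : A → B → Prop := fun i j => R (Sum.inl i) (Sum.inr j)
  let Rba : B → A → Prop := fun i j => R (Sum.inr i) (Sum.inl j)
  let Rbb : B → B → Prop := fun i j => R (Sum.inr i) (Sum.inr j)
  let Sbb : B → B → Prop := fun i j => S (Sum.inl i) (Sum.inl j)
  let Sbc : B → C → Prop := fun i j => S (Sum.inl i) (Sum.inr j)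
  let Scb : C → B → Prop := fun i j => S (Sum.inr i) (Sum.inl j)
  let Scc : C → C → Prop := fun i j => S (Sum.inr i) (Sum.inr j)
  fun x y =>
    match x, y with
    | Sum.inl i, Sum.inl j =>
        Raa i j ∨
          Relation.Comp Rab
            (Relation.Comp Sbb
              (Relation.Comp (Relation.ReflTransGen (Relation.Comp Rbb Sbb)) Rba)) i j
    | Sum.inl i, Sum.inr j =>
        Relation.Comp Rab
          (Relation.Comp (Relation.ReflTransGen (Relation.Comp Sbb Rbb)) Sbc) i j
    | Sum.inr i, Sum.inl j =>
        Relation.Comp Scb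
          (Relation.Comp (Relation.ReflTransGen (Relation.Comp Rbb Sbb)) Rba) i j
    | Sum.inr i, Sum.inr j =>
        Scc i j ∨
          Relation.Comp Scb
            (Relation.Comp Rbb
              (Relation.Comp (Relation.ReflTransGen (Relation.Comp Sbb Rbb)) Sbc)) i j

namespace Stmt6Aux

variable {n m p : ℕ} (f : Fin n ⊕ Fin m → Fin n ⊕ Fin m) (g : Fin m ⊕ Fin p → Fin m ⊕ Fin p)

def step : Fin m ⊕ Fin m → (Fin n ⊕ Fin p) ⊕ (Fin m ⊕ Fin m)
  | .inl b => match g (.inl b) with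
    | .inl b' => .inr (.inr b')
    | .inr c => .inl (.inr c)
  | .inr b => match f (.inr b) with
    | .inl a => .inl (.inl a)
    | .inr b' => .inr (.inl b')

def entry : Fin n ⊕ Fin p → (Fin n ⊕ Fin p) ⊕ (Fin m ⊕ Fin m)
  | .inl a => match f (.inl a) with
    | .inl a' => .inl (.inl a')
    | .inr b => .inr (.inl b)
  | .inr c => match g (.inr c) with
    | .inl b => .inr (.inr b)
    | .inr c' => .inl (.inr c')

lemma step_gl {b b'} (h : g (.inl b) = .inl b') : step f g (.inl b) = .inr (.inr b') := by simp [step, h]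
lemma step_gr {b c} (h : g (.inl b) = .inr c) : step f g (.inl b) = .inl (.inr c) := by simp [step, h]
lemma step_fl {b a} (h : f (.inr b) = .inl a) : step f g (.inr b) = .inl (.inl a) := by simp [step, h]
lemma step_fr {b b'} (h : f (.inr b) = .inr b') : step f g (.inr b) = .inr (.inl b') := by simp [step, h]
lemma entry_fl {a a'} (h : f (.inl a) = .inl a') : entry f g (.inl a) = .inl (.inl a') := by simp [entry, h]
lemma entry_fr {a b} (h : f (.inl a) = .inr b) : entry f g (.inl a) = .inr (.inl b) := by simp [entry, h]
lemma entry_gl {c b} (h : g (.inr c) = .inl b) : entry f g (.inr c) = .inr (.inr b) := by simp [entry, h]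
lemma entry_gr {c c'} (h : g (.inr c) = .inr c') : entry f g (.inr c) = .inl (.inr c') := by simp [entry, h]

variable (hf : Function.Involutive f) (hg : Function.Involutive g)

section
include hf hg

lemma rev_step {s s'} (h : step f g s = .inr s') :
    step f g (Sum.swap s') = .inr (Sum.swap s) := by
  rcases s with b | b
  · rcases hgb : g (.inl b) with b1 | c
    · rw [step_gl f g hgb] at h
      cases h
      have h2 : g (.inl b1) = .inl b := by
        have := hg (Sum.inl b); rw [hgb] at this; exact this
      simpa using step_gl f g h2
    · rw [step_gr f g hgb] at h; cases h
  · rcases hfb : f (.inr b) with a | b1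
    · rw [step_fl f g hfb] at h; cases h
    · rw [step_fr f g hfb] at h
      cases h
      have h2 : f (.inr b1) = .inr b := by
        have := hf (Sum.inr b); rw [hfb] at this; exact this
      simpa using step_fr f g h2

lemma entry_exit {x s} (h : entry f g x = .inr s) : step f g (Sum.swap s) = .inl x := by
  rcases x with a | c
  · rcases hfa : f (.inl a) with a' | b
    · rw [entry_fl f g hfa] at h; cases h
    · rw [entry_fr f g hfa] at h
      cases h
      have h2 : f (.inr b) = .inl a := by
        have := hf (Sum.inl a); rw [hfa] at this; exact this
      simpa using step_fl f g h2
  · rcases hgc : g (.inr c) with b | c'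
    · rw [entry_gl f g hgc] at h
      cases h
      have h2 : g (.inl b) = .inr c := by
        have := hg (Sum.inr c); rw [hgc] at this; exact this
      simpa using step_gr f g h2
    · rw [entry_gr f g hgc] at h; cases h

lemma exit_entry {t y} (h : step f g t = .inl y) : entry f g y = .inr (Sum.swap t) := by
  rcases t with b | b
  · rcases hgb : g (.inl b) with b1 | c
    · rw [step_gl f g hgb] at h; cases h
    · rw [step_gr f g hgb] at h
      cases h
      have h2 : g (.inr c) = .inl b := by
        have := hg (Sum.inl b); rw [hgb] at this; exact this
      simpa using entry_gl f g h2
  · rcases hfb : f (.inr b) with a | b1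
    · rw [step_fl f g hfb] at h
      cases h
      have h2 : f (.inl a) = .inr b := by
        have := hf (Sum.inr b); rw [hfb] at this; exact this
      simpa using entry_fr f g h2
    · rw [step_fr f g hfb] at h; cases h

lemma step_inr_inj {s t u} (h1 : step f g s = .inr u) (h2 : step f g t = .inr u) : s = t := by
  rcases s with b | b <;> rcases t with b' | b'
  · rcases hgb : g (.inl b) with b1 | c
    · rcases hgb' : g (.inl b') with b1' | c'
      · rw [step_gl f g hgb] at h1; rw [step_gl f g hgb'] at h2
        have h1 := h1.trans h2.symm
        obtain rfl : b1 = b1' := by injection h1 with h; injection h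
        have := hg.injective (hgb.trans hgb'.symm)
        injection this with h; exact congrArg Sum.inl h
      · rw [step_gr f g hgb'] at h2; cases h2
    · rw [step_gr f g hgb] at h1; cases h1
  · rcases hgb : g (.inl b) with b1 | c
    · rcases hfb' : f (.inr b') with a | b1'
      · rw [step_fl f g hfb'] at h2; cases h2
      · rw [step_gl f g hgb] at h1; rw [step_fr f g hfb'] at h2
        have h1 := h1.trans h2.symm; injection h1 with h; cases h
    · rw [step_gr f g hgb] at h1; cases h1
  · rcases hfb : f (.inr b) with a | b1
    · rw [step_fl f g hfb] at h1; cases h1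
    · rcases hgb' : g (.inl b') with b1' | c'
      · rw [step_fr f g hfb] at h1; rw [step_gl f g hgb'] at h2
        have h1 := h1.trans h2.symm; injection h1 with h; cases h
      · rw [step_gr f g hgb'] at h2; cases h2
  · rcases hfb : f (.inr b) with a | b1
    · rw [step_fl f g hfb] at h1; cases h1
    · rcases hfb' : f (.inr b') with a' | b1'
      · rw [step_fl f g hfb'] at h2; cases h2
      · rw [step_fr f g hfb] at h1; rw [step_fr f g hfb'] at h2
        have h1 := h1.trans h2.symm
        obtain rfl : b1 = b1' := by injection h1 with h; injection h
        have := hf.injective (hfb.trans hfb'.symm)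
        injection this with h; exact congrArg Sum.inr h

lemma entry_nopred {x s} (h : entry f g x = .inr s) : ∀ t, step f g t ≠ .inr s := by
  intro t hstep
  rcases x with a | c
  · rcases hfa : f (.inl a) with a' | b
    · rw [entry_fl f g hfa] at h; cases h
    · rw [entry_fr f g hfa] at h
      cases h
      rcases t with b' | b'
      · rcases hgb' : g (.inl b') with b1 | c
        · rw [step_gl f g hgb'] at hstep; injection hstep with h; cases h
        · rw [step_gr f g hgb'] at hstep; cases hstep
      · rcases hfb' : f (.inr b') with a1 | b1
        · rw [step_fl f g hfb'] at hstep; cases hstep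
        · rw [step_fr f g hfb'] at hstep
          obtain rfl : b1 = b := by injection hstep with h; injection h
          exact absurd (hf.injective (hfa.trans hfb'.symm)) (by simp)
  · rcases hgc : g (.inr c) with b | c'
    · rw [entry_gl f g hgc] at h
      cases h
      rcases t with b' | b'
      · rcases hgb' : g (.inl b') with b1 | c1
        · rw [step_gl f g hgb'] at hstep
          obtain rfl : b1 = b := by injection hstep with h; injection h
          exact absurd (hg.injective (hgc.trans hgb'.symm)) (by simp)
        · rw [step_gr f g hgb'] at hstep; cases hstep
      · rcases hfb' : f (.inr b') with a1 | b1
        · rw [step_fl f g hfb'] at hstep; cases hstep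
        · rw [step_fr f g hfb'] at hstep; injection hstep with h; cases h
    · rw [entry_gr f g hgc] at h; cases h

end


def Path (s t : Fin m ⊕ Fin m) : Prop :=
  Relation.ReflTransGen (fun a b => step f g a = .inr b) s t

def Reach (s : Fin m ⊕ Fin m) (y : Fin n ⊕ Fin p) : Prop :=
  ∃ t, Path f g s t ∧ step f g t = .inl y

def loop : ℕ → (Fin m ⊕ Fin m) → Option (Fin n ⊕ Fin p)
  | 0, _ => none
  | fuel+1, s =>
    match step f g s with
    | .inl y => some y
    | .inr s' => loop fuel s'

lemma path_rev (hrev : ∀ {s s' : Fin m ⊕ Fin m}, step f g s = .inr s' →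
      step f g (Sum.swap s') = .inr (Sum.swap s))
    {s t} (h : Path f g s t) : Path f g (Sum.swap t) (Sum.swap s) := by
  induction h with
  | refl => exact .refl
  | tail _ hstep ih => exact Relation.ReflTransGen.head (hrev hstep) ih

lemma reach_head {s s' y} (hstep : step f g s = .inr s') (h : Reach f g s' y) :
    Reach f g s y := by
  obtain ⟨t, hp, he⟩ := h
  exact ⟨t, .head hstep hp, he⟩

lemma reach_of_loop {fuel s y} (h : loop f g fuel s = some y) : Reach f g s y := by
  induction fuel generalizing s with
  | zero => simp [loop] at h
  | succ fuel ih =>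
    rw [loop] at h
    rcases hstep : step f g s with y' | s'
    · rw [hstep] at h
      simp only [Option.some.injEq] at h
      exact ⟨s, .refl, by rw [hstep, h]⟩
    · rw [hstep] at h
      exact reach_head f g hstep (ih h)

lemma loop_of_reach {s y} (h : Reach f g s y) : ∃ fuel, loop f g fuel s = some y := by
  obtain ⟨t, hp, he⟩ := h
  induction hp using Relation.ReflTransGen.head_induction_on with
  | refl => exact ⟨1, by rw [loop, he]⟩
  | head hstep _ ih =>
    obtain ⟨fuel, hfuel⟩ := ih
    exact ⟨fuel + 1, by rw [loop, hstep]; exact hfuel⟩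

lemma loop_succ {fuel s y} (h : loop f g fuel s = some y) : loop f g (fuel+1) s = some y := by
  induction fuel generalizing s with
  | zero => simp [loop] at h
  | succ fuel ih =>
    rw [loop] at h ⊢
    rcases hstep : step f g s with y' | s' <;> rw [hstep] at h
    · exact h
    · exact ih h

lemma loop_mono {fuel fuel' s y} (hle : fuel ≤ fuel') (h : loop f g fuel s = some y) :
    loop f g fuel' s = some y := by
  induction fuel', hle using Nat.le_induction with
  | base => exact h
  | succ k hk ih => exact loop_succ f g ih

lemma chain_of_none {N s} (h : loop f g N s = none) :
    ∃ u : ℕ → Fin m ⊕ Fin m, u 0 = s ∧ ∀ i < N, step f g (u i) = .inr (u (i+1)) := by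
  induction N generalizing s with
  | zero => exact ⟨fun _ => s, rfl, by omega⟩
  | succ N ih =>
    rw [loop] at h
    rcases hstep : step f g s with y' | s' <;> rw [hstep] at h
    · cases h
    · obtain ⟨u', hu0, hu⟩ := ih h
      refine ⟨fun i => match i with | 0 => s | i+1 => u' i, rfl, ?_⟩
      intro i hi
      match i with
      | 0 => simpa [hu0] using hstep
      | i+1 => exact hu i (by omega)

lemma loop_ne_none
    (hinj : ∀ {s t u : Fin m ⊕ Fin m}, step f g s = .inr u → step f g t = .inr u → s = t)
    {s} (hnopred : ∀ t, step f g t ≠ .inr s) :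
    loop f g (2*m+1) s ≠ none := by
  intro hnone
  obtain ⟨u, hu0, hu⟩ := chain_of_none f g hnone
  set N := 2*m+1 with hN
  have key : ∀ i j, i < j → j ≤ N → u i ≠ u j := by
    intro i
    induction i with
    | zero =>
      intro j hj hjN heq
      obtain ⟨j', rfl⟩ : ∃ j', j = j'+1 := ⟨j-1, by omega⟩
      exact hnopred (u j') (by rw [hu j' (by omega), ← heq, hu0])
    | succ i ih =>
      intro j hj hjN heq
      obtain ⟨j', rfl⟩ : ∃ j', j = j'+1 := ⟨j-1, by omega⟩
      have h1 : step f g (u i) = .inr (u (i+1)) := hu i (by omega)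
      have h2 : step f g (u j') = .inr (u (j'+1)) := hu j' (by omega)
      rw [heq] at h1
      exact ih j' (by omega) (by omega) (hinj h1 h2)
  have hcardle : N + 1 ≤ Fintype.card (Fin m ⊕ Fin m) := by
    have : Function.Injective (fun i : Fin (N+1) => u i.val) := by
      intro a b hab
      rcases lt_trichotomy a b with h | h | h
      · exact absurd hab (key a b h (by omega))
      · exact Fin.ext (by exact_mod_cast congrArg Fin.val h)
      · exact absurd hab.symm (key b a h (by omega))
    simpa using Fintype.card_le_of_injective _ this
  simp [Fintype.card_sum] at hcardle
  omega


def RS : Fin m → Fin m → Prop :=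
  Relation.Comp (fun u v => f (Sum.inr u) = Sum.inr v) (fun u v => g (Sum.inl u) = Sum.inl v)

def SR : Fin m → Fin m → Prop :=
  Relation.Comp (fun u v => g (Sum.inl u) = Sum.inl v) (fun u v => f (Sum.inr u) = Sum.inr v)

def Qmot (y : Fin n ⊕ Fin p) : Fin m ⊕ Fin m → Prop
  | .inl b =>
    match y with
    | .inl j => ∃ b1, g (.inl b) = .inl b1 ∧
        ∃ b2, Relation.ReflTransGen (RS f g) b1 b2 ∧ f (.inr b2) = .inl j
    | .inr j => ∃ b2, Relation.ReflTransGen (SR f g) b b2 ∧ g (.inl b2) = .inr j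
  | .inr b =>
    match y with
    | .inl j => ∃ b2, Relation.ReflTransGen (RS f g) b b2 ∧ f (.inr b2) = .inl j
    | .inr j => ∃ b1, f (.inr b) = .inr b1 ∧
        ∃ b2, Relation.ReflTransGen (SR f g) b1 b2 ∧ g (.inl b2) = .inr j

lemma reach_q {s y} (h : Reach f g s y) : Qmot f g y s := by
  obtain ⟨t, hp, he⟩ := h
  induction hp using Relation.ReflTransGen.head_induction_on with
  | refl =>
    rcases t with b | b
    · rcases hgb : g (.inl b) with b1 | c
      · rw [step_gl f g hgb] at he; cases he
      · rw [step_gr f g hgb] at he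
        obtain rfl := Sum.inl.inj he
        exact ⟨b, .refl, hgb⟩
    · rcases hfb : f (.inr b) with a | b1
      · rw [step_fl f g hfb] at he
        obtain rfl := Sum.inl.inj he
        exact ⟨b, .refl, hfb⟩
      · rw [step_fr f g hfb] at he; cases he
  | @head s1 s2 hstep _ ih =>
    rcases s1 with b | b
    · rcases hgb : g (.inl b) with b1 | c
      · rw [step_gl f g hgb] at hstep
        obtain rfl := (Sum.inr.inj hstep).symm
        rcases y with j | j
        · exact ⟨b1, hgb, ih⟩
        · obtain ⟨b1', hfb, b2, hrtg, hex⟩ := ih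
          exact ⟨b2, .head ⟨b1, hgb, hfb⟩ hrtg, hex⟩
      · rw [step_gr f g hgb] at hstep; cases hstep
    · rcases hfb : f (.inr b) with a | b1
      · rw [step_fl f g hfb] at hstep; cases hstep
      · rw [step_fr f g hfb] at hstep
        obtain rfl := (Sum.inr.inj hstep).symm
        rcases y with j | j
        · obtain ⟨b1', hgb, b2, hrtg, hex⟩ := ih
          exact ⟨b2, .head ⟨b1, hfb, hgb⟩ hrtg, hex⟩
        · exact ⟨b1, hfb, ih⟩

lemma reach_of_rs {b b2 j} (hr : Relation.ReflTransGen (RS f g) b b2)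
    (hex : f (.inr b2) = .inl j) : Reach f g (.inr b) (.inl j) := by
  induction hr using Relation.ReflTransGen.head_induction_on with
  | refl => exact ⟨.inr b2, .refl, step_fl f g hex⟩
  | @head b' c hrs _ ih =>
    obtain ⟨d, hfd, hgd⟩ := hrs
    exact reach_head f g (step_fr f g hfd) (reach_head f g (step_gl f g hgd) ih)

lemma reach_of_sr {b b2 j} (hr : Relation.ReflTransGen (SR f g) b b2)
    (hex : g (.inl b2) = .inr j) : Reach f g (.inl b) (.inr j) := by
  induction hr using Relation.ReflTransGen.head_induction_on with
  | refl => exact ⟨.inl b2, .refl, step_gr f g hex⟩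
  | @head b' c hrs _ ih =>
    obtain ⟨d, hgd, hfd⟩ := hrs
    exact reach_head f g (step_gl f g hgd) (reach_head f g (step_fr f g hfd) ih)

lemma reach_inr_inl_iff {b j} : Reach f g (.inr b) (.inl j) ↔
    ∃ b2, Relation.ReflTransGen (RS f g) b b2 ∧ f (.inr b2) = .inl j :=
  ⟨fun h => reach_q f g h, fun ⟨_, h1, h2⟩ => reach_of_rs f g h1 h2⟩

lemma reach_inl_inr_iff {b j} : Reach f g (.inl b) (.inr j) ↔
    ∃ b2, Relation.ReflTransGen (SR f g) b b2 ∧ g (.inl b2) = .inr j :=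
  ⟨fun h => reach_q f g h, fun ⟨_, h1, h2⟩ => reach_of_sr f g h1 h2⟩

lemma reach_inl_inl_iff {b j} : Reach f g (.inl b) (.inl j) ↔
    ∃ b1, g (.inl b) = .inl b1 ∧
      ∃ b2, Relation.ReflTransGen (RS f g) b1 b2 ∧ f (.inr b2) = .inl j :=
  ⟨fun h => reach_q f g h,
   fun ⟨_, hgb, _, h1, h2⟩ => reach_head f g (step_gl f g hgb) (reach_of_rs f g h1 h2)⟩

lemma reach_inr_inr_iff {b j} : Reach f g (.inr b) (.inr j) ↔
    ∃ b1, f (.inr b) = .inr b1 ∧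
      ∃ b2, Relation.ReflTransGen (SR f g) b1 b2 ∧ g (.inl b2) = .inr j :=
  ⟨fun h => reach_q f g h,
   fun ⟨_, hfb, _, h1, h2⟩ => reach_head f g (step_fr f g hfb) (reach_of_sr f g h1 h2)⟩

def exec (x : Fin n ⊕ Fin p) : Option (Fin n ⊕ Fin p) :=
  match entry f g x with
  | .inl y => some y
  | .inr s => loop f g (2*m+1) s

def ExecRel (x y : Fin n ⊕ Fin p) : Prop :=
  entry f g x = .inl y ∨ ∃ s, entry f g x = .inr s ∧ Reach f g s y

section
variable (hf : Function.Involutive f) (hg : Function.Involutive g)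
include hf hg

lemma exec_ne_none (x : Fin n ⊕ Fin p) : exec f g x ≠ none := by
  unfold exec
  rcases hentry : entry f g x with y | s
  · simp
  · exact loop_ne_none f g (fun h1 h2 => step_inr_inj f g hf hg h1 h2)
      (entry_nopred f g hf hg hentry)

lemma exec_eq_some_iff {x y} : exec f g x = some y ↔ ExecRel f g x y := by
  unfold exec ExecRel
  rcases hentry : entry f g x with y' | s
  · simp only [Option.some.injEq]
    constructor
    · rintro rfl; exact Or.inl rfl
    · rintro (h | ⟨s, hs, _⟩)
      · exact Sum.inl.inj h
      · cases hs
  · constructor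
    · intro h; exact Or.inr ⟨s, rfl, reach_of_loop f g h⟩
    · rintro (h | ⟨s', hs, hreach⟩)
      · cases h
      · obtain rfl : s = s' := Sum.inr.inj hs
        obtain ⟨fuel, hfuel⟩ := loop_of_reach f g hreach
        have hne : loop f g (2*m+1) s ≠ none :=
          loop_ne_none f g (fun h1 h2 => step_inr_inj f g hf hg h1 h2)
            (entry_nopred f g hf hg hentry)
        obtain ⟨y'', hy⟩ := Option.ne_none_iff_exists'.mp hne
        have h1 := loop_mono f g (le_max_left fuel (2*m+1)) hfuel
        have h2 := loop_mono f g (le_max_right fuel (2*m+1)) hy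
        rw [h1] at h2
        obtain rfl : y'' = y := (Option.some.inj h2).symm
        exact hy

lemma execRel_symm {x y} (h : ExecRel f g x y) : ExecRel f g y x := by
  rcases h with h | ⟨s, hentry, t, hpath, hexit⟩
  · rcases x with a | c
    · rcases hfa : f (.inl a) with a' | b
      · rw [entry_fl f g hfa] at h
        obtain rfl := Sum.inl.inj h
        exact Or.inl (entry_fl f g (by have := hf (Sum.inl a); rw [hfa] at this; exact this))
      · rw [entry_fr f g hfa] at h; cases h
    · rcases hgc : g (.inr c) with b | c'
      · rw [entry_gl f g hgc] at h; cases h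
      · rw [entry_gr f g hgc] at h
        obtain rfl := Sum.inl.inj h
        exact Or.inl (entry_gr f g (by have := hg (Sum.inr c); rw [hgc] at this; exact this))
  · exact Or.inr ⟨Sum.swap t, exit_entry f g hf hg hexit,
      Sum.swap s, path_rev f g (fun h => rev_step f g hf hg h) hpath,
      entry_exit f g hf hg hentry⟩

end

lemma path_chain {s t} (h : Path f g s t) :
    ∃ k, ∃ u : ℕ → Fin m ⊕ Fin m,
      u 0 = s ∧ u k = t ∧ ∀ i < k, step f g (u i) = .inr (u (i+1)) := by
  induction h with
  | refl => exact ⟨0, fun _ => s, rfl, rfl, by omega⟩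
  | @tail t' t hp hstep ih =>
    obtain ⟨k, u, h0, hk, hu⟩ := ih
    refine ⟨k+1, fun i => if i < k+1 then u i else t, by simp [h0], by simp, ?_⟩
    intro i hi
    show step f g (if i < k+1 then u i else t) = .inr (if i+1 < k+1 then u (i+1) else t)
    rcases Nat.lt_or_ge i k with hik | hik
    · rw [if_pos (by omega : i < k+1), if_pos (by omega : i+1 < k+1)]
      exact hu i hik
    · have hik' : i = k := by omega
      subst hik'
      rw [if_pos (by omega : i < i+1), if_neg (by omega : ¬ i+1 < i+1), hk]
      exact hstep

lemma swap_ne (s : Fin m ⊕ Fin m) : Sum.swap s ≠ s := by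
  rcases s with b | b <;> simp

lemma step_ne_swap (hf' : ∀ x, f x ≠ x) (hg' : ∀ x, g x ≠ x) (s : Fin m ⊕ Fin m) :
    step f g s ≠ .inr (Sum.swap s) := by
  rcases s with b | b <;> intro h
  · rcases hgb : g (.inl b) with b1 | c
    · rw [step_gl f g hgb] at h
      obtain rfl : b1 = b := by simpa using h
      exact hg' _ hgb
    · rw [step_gr f g hgb] at h; cases h
  · rcases hfb : f (.inr b) with a | b1
    · rw [step_fl f g hfb] at h; cases h
    · rw [step_fr f g hfb] at h
      obtain rfl : b1 = b := by simpa using h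
      exact hf' _ hfb

lemma no_path_swap (hf : Function.Involutive f) (hg : Function.Involutive g)
    (hf' : ∀ x, f x ≠ x) (hg' : ∀ x, g x ≠ x) {t} : ¬ Path f g (Sum.swap t) t := by
  intro hp
  obtain ⟨k, u, h0, hk, hu⟩ := path_chain f g hp
  have huniq : ∀ i, i ≤ k → u i = Sum.swap (u (k - i)) := by
    intro i
    induction i with
    | zero => intro _; rw [Nat.sub_zero, hk, h0]
    | succ i ih =>
      intro hik
      have h1 : step f g (u i) = .inr (u (i+1)) := hu i (by omega)
      have h2 : step f g (u (k - (i+1))) = .inr (u (k - i)) := by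
        have e : k - (i+1) + 1 = k - i := by omega
        have h3 := hu (k - (i+1)) (by omega)
        rw [e] at h3; exact h3
      have h4 := rev_step f g hf hg h2
      rw [← ih (by omega), h1] at h4
      exact Sum.inr.inj h4
  rcases Nat.even_or_odd k with he | ho
  · obtain ⟨q, rfl⟩ := he
    have h5 := huniq q (by omega)
    rw [show q + q - q = q from by omega] at h5
    exact swap_ne (u q) h5.symm
  · obtain ⟨q, rfl⟩ := ho
    have h5 := huniq q (by omega)
    rw [show 2*q+1 - q = q+1 from by omega] at h5
    have h6 : step f g (u q) = .inr (u (q+1)) := hu q (by omega)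
    rw [show u (q+1) = Sum.swap (u q) from by
      rw [h5, Sum.swap_swap]] at h6
    exact step_ne_swap f g hf' hg' (u q) h6

lemma execRel_irrefl (hf : Function.Involutive f) (hg : Function.Involutive g)
    (hf' : ∀ x, f x ≠ x) (hg' : ∀ x, g x ≠ x) (x : Fin n ⊕ Fin p) :
    ¬ ExecRel f g x x := by
  rintro (h | ⟨s, hentry, t, hpath, hexit⟩)
  · rcases x with a | c
    · rcases hfa : f (.inl a) with a' | b
      · rw [entry_fl f g hfa] at h
        obtain rfl : a' = a := by
          have := Sum.inl.inj h; injection this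
        exact hf' _ hfa
      · rw [entry_fr f g hfa] at h; cases h
    · rcases hgc : g (.inr c) with b | c'
      · rw [entry_gl f g hgc] at h; cases h
      · rw [entry_gr f g hgc] at h
        obtain rfl : c' = c := by
          have := Sum.inl.inj h; injection this
        exact hg' _ hgc
  · have h1 := exit_entry f g hf hg hexit
    rw [hentry] at h1
    obtain rfl := Sum.inr.inj h1
    exact no_path_swap f g hf hg hf' hg' hpath


lemma execR_iff_execRel (x y : Fin n ⊕ Fin p) :
    ExecR (graphRel f) (graphRel g) x y ↔ ExecRel f g x y := by
  rcases x with i | i <;> rcases y with j | j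
  · constructor
    · intro hE
      rcases hE with hE | ⟨b, hab, b1, hbb, b2, hrtg, hba⟩
      · exact Or.inl (entry_fl f g hE)
      · exact Or.inr ⟨Sum.inl b, entry_fr f g hab,
          (reach_inl_inl_iff f g).2 ⟨b1, hbb, b2, hrtg, hba⟩⟩
    · rintro (h | ⟨s, hentry, hreach⟩)
      · rcases hfa : f (.inl i) with a' | b
        · rw [entry_fl f g hfa] at h
          obtain rfl : a' = j := by have := Sum.inl.inj h; injection this
          exact Or.inl hfa
        · rw [entry_fr f g hfa] at h; cases h
      · rcases hfa : f (.inl i) with a' | b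
        · rw [entry_fl f g hfa] at hentry; cases hentry
        · rw [entry_fr f g hfa] at hentry
          obtain rfl : Sum.inl b = s := Sum.inr.inj hentry
          obtain ⟨b1, hgb, b2, hrtg, hba⟩ := (reach_inl_inl_iff f g).1 hreach
          exact Or.inr ⟨b, hfa, b1, hgb, b2, hrtg, hba⟩
  · constructor
    · intro hE
      obtain ⟨b, hab, b2, hrtg, hbc⟩ := hE
      exact Or.inr ⟨Sum.inl b, entry_fr f g hab,
        (reach_inl_inr_iff f g).2 ⟨b2, hrtg, hbc⟩⟩
    · rintro (h | ⟨s, hentry, hreach⟩)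
      · rcases hfa : f (.inl i) with a' | b
        · rw [entry_fl f g hfa] at h; exact absurd (Sum.inl.inj h) (by simp)
        · rw [entry_fr f g hfa] at h; cases h
      · rcases hfa : f (.inl i) with a' | b
        · rw [entry_fl f g hfa] at hentry; cases hentry
        · rw [entry_fr f g hfa] at hentry
          obtain rfl : Sum.inl b = s := Sum.inr.inj hentry
          obtain ⟨b2, hrtg, hbc⟩ := (reach_inl_inr_iff f g).1 hreach
          exact ⟨b, hfa, b2, hrtg, hbc⟩
  · constructor
    · intro hE
      obtain ⟨b, hcb, b2, hrtg, hba⟩ := hE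
      exact Or.inr ⟨Sum.inr b, entry_gl f g hcb,
        (reach_inr_inl_iff f g).2 ⟨b2, hrtg, hba⟩⟩
    · rintro (h | ⟨s, hentry, hreach⟩)
      · rcases hgc : g (.inr i) with b | c'
        · rw [entry_gl f g hgc] at h; cases h
        · rw [entry_gr f g hgc] at h; exact absurd (Sum.inl.inj h) (by simp)
      · rcases hgc : g (.inr i) with b | c'
        · rw [entry_gl f g hgc] at hentry
          obtain rfl : Sum.inr b = s := Sum.inr.inj hentry
          obtain ⟨b2, hrtg, hba⟩ := (reach_inr_inl_iff f g).1 hreach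
          exact ⟨b, hgc, b2, hrtg, hba⟩
        · rw [entry_gr f g hgc] at hentry; cases hentry
  · constructor
    · intro hE
      rcases hE with hE | ⟨b, hcb, b1, hbb, b2, hrtg, hbc⟩
      · exact Or.inl (entry_gr f g hE)
      · exact Or.inr ⟨Sum.inr b, entry_gl f g hcb,
          (reach_inr_inr_iff f g).2 ⟨b1, hbb, b2, hrtg, hbc⟩⟩
    · rintro (h | ⟨s, hentry, hreach⟩)
      · rcases hgc : g (.inr i) with b | c'
        · rw [entry_gl f g hgc] at h; cases h
        · rw [entry_gr f g hgc] at h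
          obtain rfl : c' = j := by have := Sum.inl.inj h; injection this
          exact Or.inl hgc
      · rcases hgc : g (.inr i) with b | c'
        · rw [entry_gl f g hgc] at hentry
          obtain rfl : Sum.inr b = s := Sum.inr.inj hentry
          obtain ⟨b1, hfb, b2, hrtg, hbc⟩ := (reach_inr_inr_iff f g).1 hreach
          exact Or.inr ⟨b, hgc, b1, hfb, b2, hrtg, hbc⟩
        · rw [entry_gr f g hgc] at hentry; cases hentry

end Stmt6Aux

/-- If `f ∈ P(n,m)` and `g ∈ P(m,p)` are planar involutions, then the relation
`θ` on `[n] + [p]` defined by the execution formula is (the graph of) a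
fixed-point free involution on `[n] + [p]`. -/
theorem stmt_6 (n m p : ℕ) (f : Fin n ⊕ Fin m → Fin n ⊕ Fin m)
    (g : Fin m ⊕ Fin p → Fin m ⊕ Fin p) (hf : Planar f) (hg : Planar g) :
    ∃ h : Fin n ⊕ Fin p → Fin n ⊕ Fin p,
      FPF h ∧ ∀ x y, ExecR (graphRel f) (graphRel g) x y ↔ h x = y := by
  obtain ⟨⟨hfI, hf'⟩, -, -⟩ := hf
  obtain ⟨⟨hgI, hg'⟩, -, -⟩ := hg
  set h : Fin n ⊕ Fin p → Fin n ⊕ Fin p :=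
    fun x => (Stmt6Aux.exec f g x).getD x with hdef
  have hsome : ∀ x, Stmt6Aux.exec f g x = some (h x) := by
    intro x
    obtain ⟨y, hy⟩ :=
      Option.ne_none_iff_exists'.mp (Stmt6Aux.exec_ne_none f g hfI hgI x)
    have hx : h x = y := by rw [hdef]; simp [hy]
    rw [hy, hx]
  have hiff : ∀ x y, ExecR (graphRel f) (graphRel g) x y ↔ h x = y := by
    intro x y
    rw [Stmt6Aux.execR_iff_execRel f g x y,
      ← Stmt6Aux.exec_eq_some_iff f g hfI hgI, hsome x]
    simp
  refine ⟨h, ⟨?_, ?_⟩, hiff⟩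
  · intro x
    have h2 : Stmt6Aux.ExecRel f g x (h x) :=
      (Stmt6Aux.exec_eq_some_iff f g hfI hgI).1 (hsome x)
    have h3 := Stmt6Aux.execRel_symm f g hfI hgI h2
    have h4 := (Stmt6Aux.exec_eq_some_iff f g hfI hgI).2 h3
    have h5 := hsome (h x)
    rw [h4] at h5
    exact (Option.some.inj h5).symm
  · intro x hx
    have h2 : Stmt6Aux.ExecRel f g x (h x) :=
      (Stmt6Aux.exec_eq_some_iff f g hfI hgI).1 (hsome x)
    rw [hx] at h2
    exact Stmt6Aux.execRel_irrefl f g hfI hgI hf' hg' x h2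
end

section
/- If f ∈ P(n, m) and g ∈ P(m, p) are planar involutions, then the composite involution θ = f; g defined by the execution formula is again planar, i.e. θ ∈ P(n, p). -/
open Sum Relation

namespace Stmt7

def lam (n m : ℕ) : Fin n ⊕ Fin m → ℕ
  | Sum.inl i => (i : ℕ)
  | Sum.inr b => n + m - 1 - (b : ℕ)

@[simp] lemma lam_inl {n m : ℕ} (i : Fin n) : lam n m (Sum.inl i) = (i : ℕ) := rfl
@[simp] lemma lam_inr {n m : ℕ} (b : Fin m) : lam n m (Sum.inr b) = n + m - 1 - (b : ℕ) := rfl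

lemma lam_inl_lt {n m : ℕ} (i : Fin n) : lam n m (Sum.inl i) < n := i.isLt

lemma lam_inr_ge {n m : ℕ} (b : Fin m) : n ≤ lam n m (Sum.inr b) := by
  have := b.isLt; simp [lam]; omega

lemma lam_inr_lt_inr {n m : ℕ} {b c : Fin m} :
    lam n m (Sum.inr b) < lam n m (Sum.inr c) ↔ (c : ℕ) < b := by
  have := b.isLt; have := c.isLt; simp [lam]; omega

lemma lam_inj {n m : ℕ} : Function.Injective (lam n m) := by
  rintro (i | b) (j | c) h
  · simp [lam] at h; exact congrArg Sum.inl (Fin.ext h)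
  · have := lam_inl_lt (n := n) (m := m) i
    have := lam_inr_ge (n := n) (m := m) c; omega
  · have := lam_inl_lt (n := n) (m := m) j
    have := lam_inr_ge (n := n) (m := m) b; omega
  · have hb := b.isLt; have hc := c.isLt; simp [lam] at h
    exact congrArg Sum.inr (Fin.ext (by omega))

lemma eq_inl_of_lam_lt {n m : ℕ} {z : Fin n ⊕ Fin m} (h : lam n m z < n) :
    ∃ i : Fin n, z = Sum.inl i := by
  rcases z with i | b
  · exact ⟨i, rfl⟩
  · exact absurd h (by have := lam_inr_ge (n := n) (m := m) b; omega)

lemma eq_inr_of_le_lam {n m : ℕ} {z : Fin n ⊕ Fin m} (h : n ≤ lam n m z) :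
    ∃ b : Fin m, z = Sum.inr b := by
  rcases z with i | b
  · exact absurd h (by have := lam_inl_lt (n := n) (m := m) i; omega)
  · exact ⟨b, rfl⟩

/-- Noncrossing with respect to the boundary coordinate. -/
def NC {n m : ℕ} (f : Fin n ⊕ Fin m → Fin n ⊕ Fin m) : Prop :=
  ∀ a b, lam n m a < lam n m b → lam n m b < lam n m (f a) →
    lam n m a < lam n m (f b) ∧ lam n m (f b) < lam n m (f a)

lemma incomp_inl_inr {α β : Type*} [Preorder α] [Preorder β] (a : α) (b : β) :
    Incomp (Sum.inl a : α ⊕ β) (Sum.inr b) :=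
  ⟨Sum.not_inl_le_inr, Sum.not_inr_le_inl⟩

lemma incomp_inr_inl {α β : Type*} [Preorder α] [Preorder β] (a : α) (b : β) :
    Incomp (Sum.inr b : α ⊕ β) (Sum.inl a) :=
  ⟨Sum.not_inr_le_inl, Sum.not_inl_le_inr⟩

lemma inl_lt_inl' {k l : ℕ} {a b : Fin k} :
    (Sum.inl a : Fin k ⊕ Fin l) < Sum.inl b ↔ (a : ℕ) < (b : ℕ) := by
  rw [Sum.inl_lt_inl_iff, Fin.lt_def]

lemma inr_lt_inr' {k l : ℕ} {a b : Fin l} :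
    (Sum.inr a : Fin k ⊕ Fin l) < Sum.inr b ↔ (a : ℕ) < (b : ℕ) := by
  rw [Sum.inr_lt_inr_iff, Fin.lt_def]

lemma planar_nc {n m : ℕ} {f : Fin n ⊕ Fin m → Fin n ⊕ Fin m}
    (hf : Planar f) : NC f := by
  obtain ⟨⟨hinv, hfp⟩, hpl1, hpl2⟩ := hf
  have finv : ∀ a b, f a = b → f b = a := fun a b h => by rw [← h, hinv]
  rintro (i | b0) b h1 h2
  · rcases hfa : f (Sum.inl i) with k | b0 <;> rw [hfa] at h2
    · -- f (inl i) = inl k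
      have hkn : (k : ℕ) < n := k.isLt
      obtain ⟨j, rfl⟩ : ∃ j : Fin n, b = Sum.inl j :=
        eq_inl_of_lam_lt (by simp at h2 ⊢; omega)
      simp only [lam_inl] at h1 h2
      obtain ⟨hl, hr⟩ := hpl1 (Sum.inl i) (Sum.inl j)
        (inl_lt_inl'.mpr h1) (by rw [hfa]; exact inl_lt_inl'.mpr h2)
      rcases hfb : f (Sum.inl j) with d | d <;> rw [hfb] at hl hr
      · rw [hfa] at hr
        rw [inl_lt_inl'] at hl hr
        simp only [lam_inl]; omega
      · rw [hfa] at hr; exact absurd hr Sum.not_inr_lt_inl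
    · -- f (inl i) = inr b0 : through arc
      rcases b with j | c
      · -- b = inl j
        simp only [lam_inl] at h1
        rcases hfb : f (Sum.inl j) with k | c'
        · -- f (inl j) = inl k : arc in N; show i < k
          have hki : (k : ℕ) ≠ i := by
            intro hk
            have hkeq : (Sum.inl k : Fin n ⊕ Fin m) = Sum.inl i :=
              congrArg Sum.inl (Fin.ext hk)
            have := finv _ _ hfb
            rw [hkeq, hfa] at this; simp at this
          have hik : (i : ℕ) < k := by
            rcases lt_or_gt_of_ne hki with hlt | hgt
            · exfalso
              have hfk : f (Sum.inl k) = Sum.inl j := finv _ _ hfb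
              obtain ⟨hl, hr⟩ := hpl1 (Sum.inl k) (Sum.inl i)
                (inl_lt_inl'.mpr hlt) (by rw [hfk]; exact inl_lt_inl'.mpr h1)
              rw [hfa] at hl
              exact absurd hl Sum.not_inl_lt_inr
            · exact hgt
          have hb0 := lam_inr_ge (n := n) (m := m) b0
          simp only [lam_inl]
          exact ⟨hik, by omega⟩
        · -- f (inl j) = inr c' : two through arcs, use PL2
          have h2' := hpl2 (Sum.inl i) (Sum.inl j)
            (by rw [hfa]; exact incomp_inr_inl _ _) (inl_lt_inl'.mpr h1)
            (by rw [hfb]; exact incomp_inl_inr _ _)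
          rw [hfa, hfb] at h2'
          rw [inr_lt_inr'] at h2'
          have hb0 := b0.isLt; have hc' := c'.isLt
          have hge := lam_inr_ge (n := n) (m := m) c'
          have hi := lam_inl_lt (n := n) (m := m) i
          refine ⟨by omega, ?_⟩
          exact lam_inr_lt_inr.mpr h2'
      · -- b = inr c with c > b0 (from h2)
        have hcb : (b0 : ℕ) < c := lam_inr_lt_inr.mp h2
        have hltc : (Sum.inr b0 : Fin n ⊕ Fin m) < Sum.inr c := inr_lt_inr'.mpr hcb
        have hfb0 : f (Sum.inr b0) = Sum.inl i := finv _ _ hfa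
        rcases hfb : f (Sum.inr c) with k | c'
        · -- through arc at c, use PL2 on (inr b0, inr c)
          have h2' := hpl2 (Sum.inr b0) (Sum.inr c)
            (by rw [hfb0]; exact incomp_inl_inr _ _) hltc
            (by rw [hfb]; exact incomp_inr_inl _ _)
          rw [hfb0, hfb, inl_lt_inl'] at h2'
          simp only [lam_inl]
          have := lam_inr_ge (n := n) (m := m) b0
          have := k.isLt
          exact ⟨h2', by omega⟩
        · -- f (inr c) = inr c' : show b0 < c'
          have hcc : (c' : ℕ) ≠ b0 := by
            intro hc
            have : (Sum.inr c' : Fin n ⊕ Fin m) = Sum.inr b0 := congrArg _ (Fin.ext hc)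
            have h' := finv _ _ hfb
            rw [this, hfb0] at h'; simp at h'
          have hb0c' : (b0 : ℕ) < c' := by
            rcases lt_or_gt_of_ne hcc with hlt | hgt
            · exfalso
              have hfc' : f (Sum.inr c') = Sum.inr c := finv _ _ hfb
              obtain ⟨hl, hr⟩ := hpl1 (Sum.inr c') (Sum.inr b0)
                (inr_lt_inr'.mpr hlt) (by rw [hfc']; exact hltc)
              rw [hfb0, hfc'] at hr
              exact absurd hr Sum.not_inl_lt_inr
            · exact hgt
          have := lam_inl_lt (n := n) (m := m) i
          have := lam_inr_ge (n := n) (m := m) c'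
          exact ⟨by omega, lam_inr_lt_inr.mpr hb0c'⟩
  · -- a = inr b0
    have hb0 := lam_inr_ge (n := n) (m := m) b0
    obtain ⟨c, rfl⟩ : ∃ c : Fin m, b = Sum.inr c := eq_inr_of_le_lam (by omega)
    obtain ⟨b1, hfa⟩ : ∃ b1 : Fin m, f (Sum.inr b0) = Sum.inr b1 := by
      apply eq_inr_of_le_lam (n := n); omega
    rw [hfa] at h2 ⊢
    have hc : (c : ℕ) < b0 := lam_inr_lt_inr.mp h1
    have hb1 : (b1 : ℕ) < c := lam_inr_lt_inr.mp h2
    have hfb1 : f (Sum.inr b1) = Sum.inr b0 := finv _ _ hfa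
    obtain ⟨hl, hr⟩ := hpl1 (Sum.inr b1) (Sum.inr c)
      (inr_lt_inr'.mpr hb1) (by rw [hfb1]; exact inr_lt_inr'.mpr hc)
    rcases hfb : f (Sum.inr c) with d | d <;> rw [hfb] at hl hr
    · exact absurd hl Sum.not_inr_lt_inl
    · rw [hfb1] at hr
      rw [inr_lt_inr'] at hl hr
      exact ⟨lam_inr_lt_inr.mpr hr, lam_inr_lt_inr.mpr hl⟩

lemma fin_comparable {k : ℕ} (a b : Fin k) : a ≤ b ∨ b ≤ a := le_total a b

lemma incomp_ne_left {n m : ℕ} {v : Fin n ⊕ Fin m} {a : Fin n}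
    (h : Incomp v (Sum.inl a)) : ∃ b, v = Sum.inr b := by
  rcases v with c | b
  · exfalso
    rcases le_total c a with h' | h'
    · exact h.1 (Sum.inl_le_inl_iff.mpr h')
    · exact h.2 (Sum.inl_le_inl_iff.mpr h')
  · exact ⟨b, rfl⟩

lemma incomp_ne_right {n m : ℕ} {v : Fin n ⊕ Fin m} {b : Fin m}
    (h : Incomp v (Sum.inr b)) : ∃ a, v = Sum.inl a := by
  rcases v with a | c
  · exact ⟨a, rfl⟩
  · exfalso
    rcases le_total c b with h' | h'
    · exact h.1 (Sum.inr_le_inr_iff.mpr h')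
    · exact h.2 (Sum.inr_le_inr_iff.mpr h')

lemma incomp_symm {X : Type*} [Preorder X] {x y : X} (h : Incomp x y) : Incomp y x :=
  ⟨h.2, h.1⟩

lemma nc_planar {n m : ℕ} {h : Fin n ⊕ Fin m → Fin n ⊕ Fin m}
    (hinv : Function.Involutive h) (hnc : NC h) : PL1 h ∧ PL2 h := by
  have finv : ∀ a b, h a = b → h b = a := fun a b hh => by rw [← hh, hinv]
  constructor
  · rintro (a | a) (b | b) hij hjf
    · -- both inl
      rw [inl_lt_inl'] at hij
      obtain ⟨c, hc⟩ : ∃ c : Fin n, h (Sum.inl a) = Sum.inl c := by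
        rcases hh : h (Sum.inl a) with c | c
        · exact ⟨c, rfl⟩
        · rw [hh] at hjf; exact absurd hjf Sum.not_inl_lt_inr
      rw [hc] at hjf ⊢; rw [inl_lt_inl'] at hjf
      obtain ⟨h1, h2⟩ := hnc (Sum.inl a) (Sum.inl b) (by simpa using hij)
        (by rw [hc]; simpa using hjf)
      rw [hc] at h2; simp only [lam_inl] at h1 h2
      obtain ⟨d, hd⟩ : ∃ d : Fin n, h (Sum.inl b) = Sum.inl d :=
        eq_inl_of_lam_lt (by have := c.isLt; omega)
      rw [hd] at h1 h2 ⊢; simp only [lam_inl] at h1 h2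
      exact ⟨inl_lt_inl'.mpr h1, inl_lt_inl'.mpr h2⟩
    · exact absurd hij Sum.not_inl_lt_inr
    · exact absurd hij Sum.not_inr_lt_inl
    · -- both inr
      rw [inr_lt_inr'] at hij
      obtain ⟨c, hc⟩ : ∃ c : Fin m, h (Sum.inr a) = Sum.inr c := by
        rcases hh : h (Sum.inr a) with c | c
        · rw [hh] at hjf; exact absurd hjf Sum.not_inr_lt_inl
        · exact ⟨c, rfl⟩
      rw [hc] at hjf ⊢; rw [inr_lt_inr'] at hjf
      -- a < b < c in Fin m; apply NC at (inr c, inr b): h (inr c) = inr a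
      have hfc : h (Sum.inr c) = Sum.inr a := finv _ _ hc
      obtain ⟨h1, h2⟩ := hnc (Sum.inr c) (Sum.inr b)
        (lam_inr_lt_inr.mpr hjf) (by rw [hfc]; exact lam_inr_lt_inr.mpr hij)
      rw [hfc] at h2
      obtain ⟨d, hd⟩ : ∃ d : Fin m, h (Sum.inr b) = Sum.inr d := by
        apply eq_inr_of_le_lam (n := n)
        have := lam_inr_ge (n := n) (m := m) c; omega
      rw [hd] at h1 h2 ⊢
      rw [lam_inr_lt_inr] at h1 h2
      exact ⟨inr_lt_inr'.mpr h2, inr_lt_inr'.mpr h1⟩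
  · rintro i j hi hij hj
    rcases i with a | a <;> rcases j with b | b
    · rw [inl_lt_inl'] at hij
      obtain ⟨qa, hqa⟩ : ∃ q, h (Sum.inl a) = Sum.inr q := incomp_ne_left hi
      obtain ⟨qb, hqb⟩ : ∃ q, h (Sum.inl b) = Sum.inr q := incomp_ne_left (incomp_symm hj)
      obtain ⟨h1, h2⟩ := hnc (Sum.inl a) (Sum.inl b) (by simpa using hij)
        (by rw [hqa]; have := lam_inr_ge (n := n) (m := m) qa;
            have := lam_inl_lt (n := n) (m := m) b; omega)
      rw [hqa, hqb] at h2 ⊢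
      exact inr_lt_inr'.mpr (lam_inr_lt_inr.mp h2)
    · exact absurd hij Sum.not_inl_lt_inr
    · exact absurd hij Sum.not_inr_lt_inl
    · rw [inr_lt_inr'] at hij
      obtain ⟨ka, hka⟩ : ∃ k, h (Sum.inr a) = Sum.inl k := incomp_ne_right hi
      obtain ⟨kb, hkb⟩ : ∃ k, h (Sum.inr b) = Sum.inl k := incomp_ne_right (incomp_symm hj)
      -- apply NC at (inl ka, inr b) : h (inl ka) = inr a
      have hfk : h (Sum.inl ka) = Sum.inr a := finv _ _ hka
      obtain ⟨h1, h2⟩ := hnc (Sum.inl ka) (Sum.inr b)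
        (by have := lam_inr_ge (n := n) (m := m) b;
            have := lam_inl_lt (n := n) (m := m) ka; omega)
        (by rw [hfk]; exact lam_inr_lt_inr.mpr hij)
      rw [hkb] at h1
      rw [hka, hkb]
      simp only [lam_inl] at h1
      exact inl_lt_inl'.mpr h1


section ChainMachinery

variable {n m p : ℕ} (f : Fin n ⊕ Fin m → Fin n ⊕ Fin m)
  (g : Fin m ⊕ Fin p → Fin m ⊕ Fin p)

/-- One step of the execution dynamics: from a state (turn, token in M),
either move to a new state or exit to the boundary. -/
def step : Bool × Fin m → (Bool × Fin m) ⊕ (Fin n ⊕ Fin p)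
  | (true, b) =>
    match g (Sum.inl b) with
    | Sum.inl b' => Sum.inl (false, b')
    | Sum.inr q => Sum.inr (Sum.inr q)
  | (false, b) =>
    match f (Sum.inr b) with
    | Sum.inr b' => Sum.inl (true, b')
    | Sum.inl i => Sum.inr (Sum.inl i)

def next1 (s : Bool × Fin m) : Option (Bool × Fin m) :=
  (step f g s).elim some (fun _ => none)

def back : Bool × Fin m → Option (Bool × Fin m)
  | (true, b) =>
    match f (Sum.inr b) with
    | Sum.inr b' => some (false, b')
    | Sum.inl _ => none
  | (false, b) =>
    match g (Sum.inl b) with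
    | Sum.inl b' => some (true, b')
    | Sum.inr _ => none

def flipSt (s : Bool × Fin m) : Bool × Fin m := (!s.1, s.2)

def st (k : ℕ) (s : Bool × Fin m) : Option (Bool × Fin m) :=
  (fun o => o.bind (next1 f g))^[k] (some s)

lemma st_zero (s) : st f g 0 s = some s := rfl

lemma iter_none (k : ℕ) : (fun o => o.bind (next1 f g))^[k] none = none :=
  Function.iterate_fixed rfl k

lemma st_succ (k s) : st f g (k+1) s =
    match next1 f g s with
    | some s' => st f g k s'
    | none => none := by
  rw [st, Function.iterate_succ_apply, Option.bind_some]
  rcases h : next1 f g s with _ | s'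
  · exact iter_none f g k
  · rfl

lemma st_succ_of_next1 {s s'} (h : next1 f g s = some s') (k) :
    st f g (k+1) s = st f g k s' := by
  rw [st_succ, h]

lemma st_succ' (k s) : st f g (k+1) s = (st f g k s).bind (next1 f g) := by
  rw [st, Function.iterate_succ_apply']; rfl

lemma st_add (a b s) : st f g (a + b) s = (st f g a s).bind (fun u => st f g b u) := by
  rw [st, add_comm, Function.iterate_add_apply]
  rcases hu : st f g a s with _ | u
  · rw [st] at hu; rw [hu]; exact iter_none f g b
  · rw [st] at hu; rw [hu]; rfl

lemma st_none_mono {a b s} (h : st f g a s = none) (hab : a ≤ b) : st f g b s = none := by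
  obtain ⟨c, rfl⟩ := Nat.exists_eq_add_of_le hab
  rw [st_add, h]; rfl

lemma st_isSome_of_le {a b s u} (h : st f g b s = some u) (hab : a ≤ b) :
    ∃ w, st f g a s = some w := by
  rcases hw : st f g a s with _ | w
  · rw [st_none_mono f g hw hab] at h; exact absurd h (by simp)
  · exact ⟨w, rfl⟩

/-- The backwards iteration. -/
def bIter (k : ℕ) (s : Bool × Fin m) : Option (Bool × Fin m) :=
  (fun o => o.bind (back f g))^[k] (some s)

lemma bIter_iter_none (k : ℕ) : (fun o => o.bind (back f g))^[k] none = none :=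
  Function.iterate_fixed rfl k

lemma bIter_succ_front (k s) : bIter f g (k+1) s =
    match back f g s with
    | some s' => bIter f g k s'
    | none => none := by
  rw [bIter, Function.iterate_succ_apply, Option.bind_some]
  rcases h : back f g s with _ | s'
  · exact bIter_iter_none f g k
  · rfl

lemma bIter_add (a b s) : bIter f g (a + b) s = (bIter f g a s).bind (fun u => bIter f g b u) := by
  rw [bIter, add_comm, Function.iterate_add_apply]
  rcases hu : bIter f g a s with _ | u
  · rw [bIter] at hu; rw [hu]; exact bIter_iter_none f g b
  · rw [bIter] at hu; rw [hu]; rfl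

end ChainMachinery

section ChainLemmas

variable {n m p : ℕ} {f : Fin n ⊕ Fin m → Fin n ⊕ Fin m}
  {g : Fin m ⊕ Fin p → Fin m ⊕ Fin p}

/-- Case analysis for `next1`. -/
lemma next1_true {b : Fin m} :
    (∃ b', g (Sum.inl b) = Sum.inl b' ∧ next1 f g (true, b) = some (false, b')) ∨
    (∃ q, g (Sum.inl b) = Sum.inr q ∧ next1 f g (true, b) = none) := by
  rcases hg : g (Sum.inl b) with b' | q
  · exact Or.inl ⟨b', rfl, by simp [next1, step, hg]⟩
  · exact Or.inr ⟨q, rfl, by simp [next1, step, hg]⟩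

lemma next1_false {b : Fin m} :
    (∃ b', f (Sum.inr b) = Sum.inr b' ∧ next1 f g (false, b) = some (true, b')) ∨
    (∃ i, f (Sum.inr b) = Sum.inl i ∧ next1 f g (false, b) = none) := by
  rcases hf : f (Sum.inr b) with i | b'
  · exact Or.inr ⟨i, rfl, by simp [next1, step, hf]⟩
  · exact Or.inl ⟨b', rfl, by simp [next1, step, hf]⟩

lemma next1_true_eq {b b' : Fin m} (h : g (Sum.inl b) = Sum.inl b') :
    next1 f g (true, b) = some (false, b') := by simp [next1, step, h]

lemma next1_false_eq {b b' : Fin m} (h : f (Sum.inr b) = Sum.inr b') :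
    next1 f g (false, b) = some (true, b') := by simp [next1, step, h]

lemma next1_some_cases {s s' : Bool × Fin m} (h : next1 f g s = some s') :
    (∃ b b', s = (true, b) ∧ s' = (false, b') ∧ g (Sum.inl b) = Sum.inl b') ∨
    (∃ b b', s = (false, b) ∧ s' = (true, b') ∧ f (Sum.inr b) = Sum.inr b') := by
  rcases s with ⟨t, b⟩
  cases t
  · rcases next1_false (f := f) (g := g) (b := b) with ⟨b', hfb, hn⟩ | ⟨i, hfb, hn⟩
    · rw [hn] at h
      exact Or.inr ⟨b, b', rfl, (Option.some_inj.mp h).symm, hfb⟩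
    · rw [hn] at h; exact absurd h (by simp)
  · rcases next1_true (f := f) (g := g) (b := b) with ⟨b', hgb, hn⟩ | ⟨q, hgb, hn⟩
    · rw [hn] at h
      exact Or.inl ⟨b, b', rfl, (Option.some_inj.mp h).symm, hgb⟩
    · rw [hn] at h; exact absurd h (by simp)

lemma step_inr_cases {s : Bool × Fin m} {e : Fin n ⊕ Fin p} (h : step f g s = Sum.inr e) :
    (∃ b q, s = (true, b) ∧ e = Sum.inr q ∧ g (Sum.inl b) = Sum.inr q) ∨
    (∃ b i, s = (false, b) ∧ e = Sum.inl i ∧ f (Sum.inr b) = Sum.inl i) := by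
  rcases s with ⟨t, b⟩
  cases t
  · rcases hf : f (Sum.inr b) with i | b'
    · simp [step, hf] at h
      exact Or.inr ⟨b, i, rfl, h.symm, hf⟩
    · simp [step, hf] at h
  · rcases hg : g (Sum.inl b) with b' | q
    · simp [step, hg] at h
    · simp [step, hg] at h
      exact Or.inl ⟨b, q, rfl, h.symm, hg⟩

variable (hfi : Function.Involutive f) (hgi : Function.Involutive g)

include hfi hgi in
lemma back_next1 {s s'} (h : next1 f g s = some s') : back f g s' = some s := by
  rcases next1_some_cases h with ⟨b, b', h1, h2, h3⟩ | ⟨b, b', h1, h2, h3⟩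
  · subst h1; subst h2
    have : g (Sum.inl b') = Sum.inl b := by rw [← h3, hgi]
    simp [back, this]
  · subst h1; subst h2
    have : f (Sum.inr b') = Sum.inr b := by rw [← h3, hfi]
    simp [back, this]

include hfi hgi in
lemma next1_flip {s s'} (h : next1 f g s = some s') :
    next1 f g (flipSt s') = some (flipSt s) := by
  rcases next1_some_cases h with ⟨b, b', h1, h2, h3⟩ | ⟨b, b', h1, h2, h3⟩
  · subst h1; subst h2
    have : g (Sum.inl b') = Sum.inl b := by rw [← h3, hgi]
    simpa [flipSt] using next1_true_eq (f := f) this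
  · subst h1; subst h2
    have : f (Sum.inr b') = Sum.inr b := by rw [← h3, hfi]
    simpa [flipSt] using next1_false_eq (g := g) this

include hfi hgi in
lemma st_rev {l s u} (h : st f g l s = some u) :
    st f g l (flipSt u) = some (flipSt s) := by
  induction l generalizing u with
  | zero => rw [st_zero] at h; rw [Option.some_inj.mp h]; exact st_zero f g _
  | succ k ih =>
    rw [st_succ'] at h
    rcases hw : st f g k s with _ | w
    · rw [hw] at h; exact absurd h (by simp)
    · rw [hw] at h; simp only [Option.bind_some] at h
      have ihw := ih hw
      rw [st_succ_of_next1 f g (next1_flip hfi hgi h) k]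
      exact ihw

include hfi hgi in
lemma bIter_of_st {j s₀ s} (h : st f g j s₀ = some s) : bIter f g j s = some s₀ := by
  induction j generalizing s with
  | zero => rw [st_zero] at h; rw [Option.some_inj.mp h]; rfl
  | succ k ih =>
    rw [st_succ'] at h
    rcases hw : st f g k s₀ with _ | w
    · rw [hw] at h; exact absurd h (by simp)
    · rw [hw] at h; simp only [Option.bind_some] at h
      have hb : back f g s = some w := back_next1 hfi hgi h
      rw [show k + 1 = 1 + k from by omega, bIter_add]
      have : bIter f g 1 s = some w := by
        rw [bIter_succ_front, hb]; rfl
      rw [this]; exact ih hw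

end ChainLemmas
section RunDef

variable {n m p : ℕ} (f : Fin n ⊕ Fin m → Fin n ⊕ Fin m)
  (g : Fin m ⊕ Fin p → Fin m ⊕ Fin p)

def run : ℕ → (Bool × Fin m) → Option (Fin n ⊕ Fin p)
  | 0, _ => none
  | (k+1), s =>
    match step f g s with
    | Sum.inr e => some e
    | Sum.inl s' => run k s'

def start (x : Fin n ⊕ Fin p) : Option (Bool × Fin m) :=
  match x with
  | Sum.inl i =>
    match f (Sum.inl i) with
    | Sum.inr b => some (true, b)
    | Sum.inl _ => none
  | Sum.inr q =>
    match g (Sum.inr q) with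
    | Sum.inl b => some (false, b)
    | Sum.inr _ => none

def hFun (x : Fin n ⊕ Fin p) : Fin n ⊕ Fin p :=
  match x with
  | Sum.inl i =>
    match f (Sum.inl i) with
    | Sum.inl j => Sum.inl j
    | Sum.inr b => (run f g (2*m+2) (true, b)).getD (Sum.inl i)
  | Sum.inr q =>
    match g (Sum.inr q) with
    | Sum.inr r => Sum.inr r
    | Sum.inl b => (run f g (2*m+2) (false, b)).getD (Sum.inr q)

end RunDef

section RunLemmas

variable {n m p : ℕ} {f : Fin n ⊕ Fin m → Fin n ⊕ Fin m}
  {g : Fin m ⊕ Fin p → Fin m ⊕ Fin p}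

lemma inv_swap {α : Type*} {F : α → α} (hF : Function.Involutive F) {a b : α}
    (h : F a = b) : F b = a := by rw [← h, hF]

lemma next1_eq_of_step {s s'} (h : step f g s = Sum.inl s') : next1 f g s = some s' := by
  simp [next1, h]

lemma next1_none_of_step {s e} (h : step f g s = Sum.inr e) : next1 f g s = none := by
  simp [next1, h]

lemma run_eq_some_iff {k s e} :
    run f g k s = some e ↔ ∃ l, l < k ∧ ∃ u, st f g l s = some u ∧ step f g u = Sum.inr e := by
  induction k generalizing s with
  | zero => simp [run]
  | succ k ih =>
    rcases hs : step f g s with s' | e'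
    · rw [show run f g (k+1) s = run f g k s' from by rw [run, hs]]
      rw [ih]
      constructor
      · rintro ⟨l, hl, u, hu, hstep⟩
        exact ⟨l + 1, by omega, u, by rw [st_succ_of_next1 f g (next1_eq_of_step hs)]; exact hu, hstep⟩
      · rintro ⟨l, hl, u, hu, hstep⟩
        rcases l with _ | l'
        · rw [st_zero] at hu
          rw [← Option.some_inj.mp hu] at hstep
          rw [hs] at hstep; exact absurd hstep (by simp)
        · rw [st_succ_of_next1 f g (next1_eq_of_step hs)] at hu
          exact ⟨l', by omega, u, hu, hstep⟩
    · rw [show run f g (k+1) s = some e' from by rw [run, hs]]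
      constructor
      · intro he
        exact ⟨0, by omega, s, st_zero f g s, by rw [hs, Option.some_inj.mp he]⟩
      · rintro ⟨l, hl, u, hu, hstep⟩
        rcases l with _ | l'
        · rw [st_zero] at hu
          rw [← Option.some_inj.mp hu] at hstep
          rw [hs] at hstep
          rw [Sum.inr.injEq] at hstep; rw [hstep]
        · rw [st_succ f g, next1_none_of_step hs] at hu
          exact absurd hu (by simp)

lemma exit_unique {s₀ : Bool × Fin m} {l l' u u' e e'}
    (h1 : st f g l s₀ = some u) (h2 : step f g u = Sum.inr e)
    (h3 : st f g l' s₀ = some u') (h4 : step f g u' = Sum.inr e') :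
    l = l' ∧ u = u' ∧ e = e' := by
  have key : ∀ (a b : ℕ) (v v' : Bool × Fin m) (ee : Fin n ⊕ Fin p), a < b →
      st f g a s₀ = some v →
      step f g v = Sum.inr ee → st f g b s₀ = some v' → False := by
    intro a b v v' ee hab ha hsv hb
    have : st f g (a+1) s₀ = none := by
      rw [st_succ' f g, ha, Option.bind_some, next1_none_of_step hsv]
    rw [st_none_mono f g this (by omega)] at hb
    exact absurd hb (by simp)
  rcases lt_trichotomy l l' with hlt | heq | hgt
  · exact (key l l' u u' e hlt h1 h2 h3).elim
  · subst heq
    rw [h1] at h3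
    have := Option.some_inj.mp h3
    subst this
    rw [h2] at h4
    exact ⟨rfl, rfl, Sum.inr_injective h4⟩
  · exact (key l' l u' u e' hgt h3 h4 h1).elim

variable (hfi : Function.Involutive f) (hgi : Function.Involutive g)

include hfi hgi in
lemma st_descend {s₀ : Bool × Fin m} {i j u} (hij : i ≤ j)
    (hi : st f g i s₀ = some u) (hj : st f g j s₀ = some u) :
    st f g (j - i) s₀ = some s₀ := by
  induction i generalizing j u with
  | zero =>
    rw [st_zero] at hi
    rw [← Option.some_inj.mp hi] at hj
    simpa using hj
  | succ i' ih =>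
    rcases j with _ | j'
    · omega
    rw [st_succ' f g] at hi hj
    rcases hw : st f g i' s₀ with _ | w
    · rw [hw] at hi; exact absurd hi (by simp)
    rcases hw' : st f g j' s₀ with _ | w'
    · rw [hw'] at hj; exact absurd hj (by simp)
    rw [hw, Option.bind_some] at hi
    rw [hw', Option.bind_some] at hj
    have hb1 := back_next1 hfi hgi hi
    have hb2 := back_next1 hfi hgi hj
    rw [hb1] at hb2
    have : w = w' := Option.some_inj.mp hb2
    subst this
    have := ih (by omega) hw hw'
    simpa using this

include hfi hgi in
lemma exists_exit {s₀ : Bool × Fin m} (hb : back f g s₀ = none) :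
    ∃ l, l < 2*m+2 ∧ ∃ u e, st f g l s₀ = some u ∧ step f g u = Sum.inr e := by
  by_contra hcon
  push_neg at hcon
  have alive : ∀ l, l < 2*m+2 → ∃ u, st f g l s₀ = some u := by
    intro l
    induction l with
    | zero => exact fun _ => ⟨s₀, st_zero f g s₀⟩
    | succ k ih =>
      intro hk
      obtain ⟨u, hu⟩ := ih (by omega)
      rcases hs : step f g u with s' | e
      · refine ⟨s', ?_⟩
        rw [st_succ' f g, hu, Option.bind_some, next1_eq_of_step hs]
      · exact (hcon k (by omega) u e hu hs).elim
  have hcard : Fintype.card (Bool × Fin m) < Fintype.card (Fin (2*m+2)) := by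
    simp [Fintype.card_prod]
  have : ∀ l : Fin (2*m+2), ∃ u, st f g (l : ℕ) s₀ = some u := fun l => alive l l.isLt
  choose U hU using this
  obtain ⟨a, b, hne, heq⟩ := Fintype.exists_ne_map_eq_of_card_lt U hcard
  -- wlog a < b
  have main : ∀ a b : Fin (2*m+2), (a : ℕ) < (b : ℕ) → U a = U b → False := by
    intro a b hab heq
    have h1 := hU a
    have h2 := hU b
    rw [heq] at h1
    have hd := st_descend hfi hgi (le_of_lt hab) h1 h2
    have hpos : 1 ≤ (b : ℕ) - (a : ℕ) := by omega
    obtain ⟨c, hc⟩ : ∃ c, (b : ℕ) - (a : ℕ) = c + 1 := ⟨(b : ℕ) - a - 1, by omega⟩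
    rw [hc, st_succ' f g] at hd
    rcases hw : st f g c s₀ with _ | w
    · rw [hw] at hd; exact absurd hd (by simp)
    · rw [hw, Option.bind_some] at hd
      have := back_next1 hfi hgi hd
      rw [hb] at this; exact absurd this (by simp)
  rcases lt_trichotomy (a : ℕ) (b : ℕ) with hlt | heq' | hgt
  · exact main a b hlt heq
  · exact hne (Fin.ext heq')
  · exact main b a hgt heq.symm

include hfi hgi in
lemma start_back_none {x s₀} (h : start f g x = some s₀) : back f g s₀ = none := by
  rcases x with i | q
  · rcases hf : f (Sum.inl i) with j | b
    · rw [start, hf] at h; exact absurd h (by simp)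
    · rw [start, hf] at h
      rw [← Option.some_inj.mp h]
      have : f (Sum.inr b) = Sum.inl i := by rw [← hf, hfi]
      simp [back, this]
  · rcases hg : g (Sum.inr q) with b | r
    · rw [start, hg] at h
      rw [← Option.some_inj.mp h]
      have : g (Sum.inl b) = Sum.inr q := by rw [← hg, hgi]
      simp [back, this]
    · rw [start, hg] at h; exact absurd h (by simp)

lemma start_cases {x : Fin n ⊕ Fin p} {s₀} (h : start f g x = some s₀) :
    (∃ i b, x = Sum.inl i ∧ s₀ = (true, b) ∧ f (Sum.inl i) = Sum.inr b) ∨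
    (∃ q b, x = Sum.inr q ∧ s₀ = (false, b) ∧ g (Sum.inr q) = Sum.inl b) := by
  rcases x with i | q
  · rcases hf : f (Sum.inl i) with j | b
    · rw [start, hf] at h; exact absurd h (by simp)
    · rw [start, hf] at h
      exact Or.inl ⟨i, b, rfl, (Option.some_inj.mp h).symm, hf⟩
  · rcases hg : g (Sum.inr q) with b | r
    · rw [start, hg] at h
      exact Or.inr ⟨q, b, rfl, (Option.some_inj.mp h).symm, hg⟩
    · rw [start, hg] at h; exact absurd h (by simp)

include hfi hgi in
lemma start_inj {x x' s₀} (h : start f g x = some s₀) (h' : start f g x' = some s₀) :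
    x = x' := by
  rcases start_cases h with ⟨i, b, rfl, hs1, hf1⟩ | ⟨q, b, rfl, hs1, hg1⟩ <;>
    rcases start_cases h' with ⟨i', b', rfl, hs2, hf2⟩ | ⟨q', b', rfl, hs2, hg2⟩
  · rw [hs1] at hs2
    have hb : b = b' := congrArg Prod.snd hs2
    subst hb
    have e1 : f (Sum.inr b) = Sum.inl i := by rw [← hf1, hfi]
    have e2 : f (Sum.inr b) = Sum.inl i' := by rw [← hf2, hfi]
    rw [e1] at e2
    rw [Sum.inl_injective e2]
  · rw [hs1] at hs2; exact absurd (congrArg Prod.fst hs2) (by simp)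
  · rw [hs1] at hs2; exact absurd (congrArg Prod.fst hs2) (by simp)
  · rw [hs1] at hs2
    have hb : b = b' := congrArg Prod.snd hs2
    subst hb
    have e1 : g (Sum.inl b) = Sum.inr q := by rw [← hg1, hgi]
    have e2 : g (Sum.inl b) = Sum.inr q' := by rw [← hg2, hgi]
    rw [e1] at e2
    rw [Sum.inr_injective e2]

lemma hFun_direct_l {i j} (h : f (Sum.inl i) = Sum.inl j) :
    hFun f g (Sum.inl i) = Sum.inl j := by
  rw [hFun, h]

lemma hFun_direct_r {q r} (h : g (Sum.inr q) = Sum.inr r) :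
    hFun f g (Sum.inr q) = Sum.inr r := by
  rw [hFun, h]

lemma start_none_l {i : Fin n} (h : start f g (Sum.inl i : Fin n ⊕ Fin p) = none) :
    ∃ j, f (Sum.inl i) = Sum.inl j := by
  rcases hf : f (Sum.inl i) with j | b
  · exact ⟨j, rfl⟩
  · rw [start, hf] at h; exact absurd h (by simp)

lemma start_none_r {q : Fin p} (h : start f g (Sum.inr q : Fin n ⊕ Fin p) = none) :
    ∃ r, g (Sum.inr q) = Sum.inr r := by
  rcases hg : g (Sum.inr q) with b | r
  · rw [start, hg] at h; exact absurd h (by simp)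
  · exact ⟨r, rfl⟩

lemma hFun_eq_run {x s₀ e} (h : start f g x = some s₀)
    (hr : run f g (2*m+2) s₀ = some e) : hFun f g x = e := by
  rcases start_cases h with ⟨i, b, rfl, rfl, hf1⟩ | ⟨q, b, rfl, rfl, hg1⟩
  · simp only [hFun, hf1, hr, Option.getD_some]
  · simp only [hFun, hg1, hr, Option.getD_some]

include hfi hgi in
lemma hFun_eq_of_exit {x s₀ l u e} (h : start f g x = some s₀)
    (hst : st f g l s₀ = some u) (hstep : step f g u = Sum.inr e) :
    hFun f g x = e := by
  obtain ⟨l₀, hl₀, u₀, e₀, hst₀, hstep₀⟩ := exists_exit hfi hgi (start_back_none hfi hgi h)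
  have hrun : run f g (2*m+2) s₀ = some e₀ :=
    run_eq_some_iff.mpr ⟨l₀, hl₀, u₀, hst₀, hstep₀⟩
  obtain ⟨_, _, he⟩ := exit_unique hst hstep hst₀ hstep₀
  rw [he]; exact hFun_eq_run h hrun

include hfi hgi in
lemma hFun_exit {x s₀} (h : start f g x = some s₀) :
    ∃ l u, l < 2*m+2 ∧ st f g l s₀ = some u ∧ step f g u = Sum.inr (hFun f g x) := by
  obtain ⟨l₀, hl₀, u₀, e₀, hst₀, hstep₀⟩ := exists_exit hfi hgi (start_back_none hfi hgi h)
  have := hFun_eq_of_exit hfi hgi h hst₀ hstep₀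
  exact ⟨l₀, u₀, hl₀, hst₀, by rw [this]; exact hstep₀⟩

include hfi hgi in
lemma start_of_exit {u : Bool × Fin m} {e} (hstep : step f g u = Sum.inr e) :
    start f g e = some (flipSt u) := by
  rcases step_inr_cases hstep with ⟨b, q, rfl, rfl, hgb⟩ | ⟨b, i, rfl, rfl, hfb⟩
  · have : g (Sum.inr q) = Sum.inl b := by rw [← hgb, hgi]
    rw [start, this]; rfl
  · have : f (Sum.inl i) = Sum.inr b := by rw [← hfb, hfi]
    rw [start, this]; rfl

include hfi hgi in
lemma step_flip_start {x s₀} (h : start f g x = some s₀) :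
    step f g (flipSt s₀) = Sum.inr x := by
  rcases start_cases h with ⟨i, b, rfl, rfl, hf1⟩ | ⟨q, b, rfl, rfl, hg1⟩
  · have : f (Sum.inr b) = Sum.inl i := by rw [← hf1, hfi]
    simp [flipSt, step, this]
  · have : g (Sum.inl b) = Sum.inr q := by rw [← hg1, hgi]
    simp [flipSt, step, this]

include hfi hgi in
lemma hFun_invol : Function.Involutive (hFun f g) := by
  intro x
  rcases hs : start f g x with _ | s₀
  · rcases x with i | q
    · obtain ⟨j, hj⟩ := start_none_l hs
      rw [hFun_direct_l hj, hFun_direct_l (inv_swap hfi hj)]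
    · obtain ⟨r, hr⟩ := start_none_r hs
      rw [hFun_direct_r hr, hFun_direct_r (inv_swap hgi hr)]
  · obtain ⟨l, u, hl, hst, hstep⟩ := hFun_exit hfi hgi hs
    have h1 : start f g (hFun f g x) = some (flipSt u) := start_of_exit hfi hgi hstep
    have h2 : st f g l (flipSt u) = some (flipSt s₀) := st_rev hfi hgi hst
    have h3 : step f g (flipSt s₀) = Sum.inr x := step_flip_start hfi hgi hs
    exact hFun_eq_of_exit hfi hgi h1 h2 h3

variable (hffp : ∀ z, f z ≠ z) (hgfp : ∀ z, g z ≠ z)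

include hffp hgfp in
lemma next1_ne_flip {s : Bool × Fin m} : next1 f g s ≠ some (flipSt s) := by
  intro h
  rcases next1_some_cases h with ⟨b, b', h1, h2, h3⟩ | ⟨b, b', h1, h2, h3⟩
  · subst h1
    have hb : b = b' := by
      have := congrArg Prod.snd h2; simpa [flipSt] using this
    subst hb
    exact hgfp _ h3
  · subst h1
    have hb : b = b' := by
      have := congrArg Prod.snd h2; simpa [flipSt] using this
    subst hb
    exact hffp _ h3

lemma st_fst {l : ℕ} {s u : Bool × Fin m} (h : st f g l s = some u) :
    u.1 = (if l % 2 = 0 then s.1 else !s.1) := by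
  induction l generalizing u with
  | zero => rw [st_zero] at h; rw [← Option.some_inj.mp h]; simp
  | succ k ih =>
    rw [st_succ' f g] at h
    rcases hw : st f g k s with _ | w
    · rw [hw] at h; exact absurd h (by simp)
    · rw [hw, Option.bind_some] at h
      have hw1 := ih hw
      have : u.1 = !w.1 := by
        rcases next1_some_cases h with ⟨b, b', h1, h2, h3⟩ | ⟨b, b', h1, h2, h3⟩ <;>
          (subst h1; subst h2; simp [hw1] <;> rfl)
      rw [this, hw1]
      rcases Nat.even_or_odd k with he | ho
      · have h1 : k % 2 = 0 := Nat.even_iff.mp he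
        have h2 : (k+1) % 2 = 1 := by omega
        simp [h1, h2]
      · have h1 : k % 2 = 1 := Nat.odd_iff.mp ho
        have h2 : (k+1) % 2 = 0 := by omega
        simp [h1, h2]

include hfi hgi hffp hgfp in
lemma no_palindrome {l : ℕ} {s₀ : Bool × Fin m} (h : st f g l s₀ = some (flipSt s₀)) :
    False := by
  have hodd : l % 2 = 1 := by
    have := st_fst h
    rcases Nat.even_or_odd l with he | ho
    · rw [if_pos (Nat.even_iff.mp he)] at this
      simp [flipSt] at this
    · exact Nat.odd_iff.mp ho
  obtain ⟨k, hk⟩ : ∃ k, l = k + (k + 1) := ⟨l / 2, by omega⟩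
  rw [hk, st_add] at h
  rcases hw : st f g k s₀ with _ | w
  · rw [hw] at h; exact absurd h (by simp)
  rw [hw, Option.bind_some] at h
  -- h : st f g (k+1) w = some (flipSt s₀)
  have hrev : st f g (k+1) (flipSt (flipSt s₀)) = some (flipSt w) := st_rev hfi hgi h
  have hff : flipSt (flipSt s₀) = s₀ := by simp [flipSt]
  rw [hff] at hrev
  -- hrev : st f g (k+1) s₀ = some (flipSt w)
  have hstep : st f g (k+1) s₀ = (st f g k s₀).bind (next1 f g) := st_succ' f g k s₀
  rw [hrev, hw, Option.bind_some] at hstep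
  exact next1_ne_flip hffp hgfp (s := w) (hstep.symm)

include hfi hgi hffp hgfp in
lemma hFun_fpf : ∀ x, hFun f g x ≠ x := by
  intro x hx
  rcases hs : start f g x with _ | s₀
  · rcases x with i | q
    · obtain ⟨j, hj⟩ := start_none_l hs
      rw [hFun_direct_l hj] at hx
      have : j = i := Sum.inl_injective hx
      subst this
      exact hffp _ hj
    · obtain ⟨r, hr⟩ := start_none_r hs
      rw [hFun_direct_r hr] at hx
      have : r = q := Sum.inr_injective hx
      subst this
      exact hgfp _ hr
  · obtain ⟨l, u, hl, hst, hstep⟩ := hFun_exit hfi hgi hs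
    rw [hx] at hstep
    -- exit value is x itself; identify u with flipSt s₀
    have h1 : start f g x = some (flipSt u) := start_of_exit hfi hgi hstep
    rw [hs] at h1
    have : s₀ = flipSt u := Option.some_inj.mp h1
    have hu : u = flipSt s₀ := by rw [this]; simp [flipSt]
    rw [hu] at hst
    exact no_palindrome hfi hgi hffp hgfp hst

end RunLemmas

section ExecIff

variable {n m p : ℕ} {f : Fin n ⊕ Fin m → Fin n ⊕ Fin m}
  {g : Fin m ⊕ Fin p → Fin m ⊕ Fin p}

/-- relation abbreviations -/
def Rbb (f : Fin n ⊕ Fin m → Fin n ⊕ Fin m) : Fin m → Fin m → Prop :=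
  fun c d => f (Sum.inr c) = Sum.inr d
def Sbb (g : Fin m ⊕ Fin p → Fin m ⊕ Fin p) : Fin m → Fin m → Prop :=
  fun c d => g (Sum.inl c) = Sum.inl d

lemma tt_iff {b b' : Fin m} :
    (∃ k, st f g k (true, b) = some (true, b')) ↔
      Relation.ReflTransGen (Relation.Comp (Sbb g) (Rbb f)) b b' := by
  constructor
  · rintro ⟨k, hk⟩
    induction k using Nat.strong_induction_on generalizing b with
    | _ k ih =>
      rcases k with _ | k
      · rw [st_zero] at hk
        have : b = b' := congrArg Prod.snd (Option.some_inj.mp hk)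
        rw [this]
      · rcases next1_true (f := f) (g := g) (b := b) with ⟨c, hgc, hn⟩ | ⟨q, hgq, hn⟩
        · rw [st_succ_of_next1 f g hn] at hk
          rcases k with _ | k'
          · rw [st_zero] at hk
            exact absurd (congrArg Prod.fst (Option.some_inj.mp hk)) (by simp)
          · rcases next1_false (f := f) (g := g) (b := c) with ⟨d, hfd, hn'⟩ | ⟨i, hfi', hn'⟩
            · rw [st_succ_of_next1 f g hn'] at hk
              exact Relation.ReflTransGen.head ⟨c, hgc, hfd⟩ (ih k' (by omega) hk)
            · rw [st_succ f g, hn'] at hk; exact absurd hk (by simp)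
        · rw [st_succ f g, hn] at hk; exact absurd hk (by simp)
  · intro hrtg
    induction hrtg with
    | refl => exact ⟨0, st_zero f g _⟩
    | tail hr hcomp ih =>
      obtain ⟨k, hk⟩ := ih
      obtain ⟨d, hgd, hfd⟩ := hcomp
      refine ⟨k + 2, ?_⟩
      rw [st_add f g k 2, hk, Option.bind_some,
        st_succ_of_next1 f g (next1_true_eq hgd),
        st_succ_of_next1 f g (next1_false_eq hfd), st_zero]

lemma ff_iff {b b' : Fin m} :
    (∃ k, st f g k (false, b) = some (false, b')) ↔
      Relation.ReflTransGen (Relation.Comp (Rbb f) (Sbb g)) b b' := by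
  constructor
  · rintro ⟨k, hk⟩
    induction k using Nat.strong_induction_on generalizing b with
    | _ k ih =>
      rcases k with _ | k
      · rw [st_zero] at hk
        have : b = b' := congrArg Prod.snd (Option.some_inj.mp hk)
        rw [this]
      · rcases next1_false (f := f) (g := g) (b := b) with ⟨c, hfc, hn⟩ | ⟨i, hfi', hn⟩
        · rw [st_succ_of_next1 f g hn] at hk
          rcases k with _ | k'
          · rw [st_zero] at hk
            exact absurd (congrArg Prod.fst (Option.some_inj.mp hk)) (by simp)
          · rcases next1_true (f := f) (g := g) (b := c) with ⟨d, hgd, hn'⟩ | ⟨q, hgq, hn'⟩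
            · rw [st_succ_of_next1 f g hn'] at hk
              exact Relation.ReflTransGen.head ⟨c, hfc, hgd⟩ (ih k' (by omega) hk)
            · rw [st_succ f g, hn'] at hk; exact absurd hk (by simp)
        · rw [st_succ f g, hn] at hk; exact absurd hk (by simp)
  · intro hrtg
    induction hrtg with
    | refl => exact ⟨0, st_zero f g _⟩
    | tail hr hcomp ih =>
      obtain ⟨k, hk⟩ := ih
      obtain ⟨d, hfd, hgd⟩ := hcomp
      refine ⟨k + 2, ?_⟩
      rw [st_add f g k 2, hk, Option.bind_some,
        st_succ_of_next1 f g (next1_false_eq hfd),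
        st_succ_of_next1 f g (next1_true_eq hgd), st_zero]

variable (hfi : Function.Involutive f) (hgi : Function.Involutive g)

include hfi hgi in
theorem execR_iff_hFun : ∀ x y, ExecR (graphRel f) (graphRel g) x y ↔ hFun f g x = y := by
  rintro (i | q) (j | r)
  · -- LL
    show (graphRel f (Sum.inl i) (Sum.inl j) ∨ _) ↔ _
    constructor
    · rintro (hraa | ⟨b, hb, c, hc, d, hd, hexit⟩)
      · rw [hFun_direct_l hraa]
      · have hstart : start f g (Sum.inl i : Fin n ⊕ Fin p) = some (true, b) := by
          rw [start, hb]
        obtain ⟨k, hk⟩ : ∃ k, st f g k (false, c) = some (false, d) := ff_iff.mpr hd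
        have hst : st f g (k + 1) (true, b) = some (false, d) := by
          rw [st_succ_of_next1 f g (next1_true_eq hc)]; exact hk
        exact hFun_eq_of_exit hfi hgi hstart hst
          (by simp [step, show f (Sum.inr d) = Sum.inl j from hexit])
    · intro hx
      rcases hfa : f (Sum.inl i) with j' | b
      · have := hFun_direct_l (f := f) (g := g) hfa
        rw [hx] at this
        obtain rfl : j = j' := Sum.inl_injective this
        exact Or.inl hfa
      · have hstart : start f g (Sum.inl i : Fin n ⊕ Fin p) = some (true, b) := by
          rw [start, hfa]
        obtain ⟨l, u, hl, hst, hstep⟩ := hFun_exit hfi hgi hstart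
        rw [hx] at hstep
        rcases step_inr_cases hstep with ⟨b', q, _, heq, _⟩ | ⟨d, i', hu, heq, hfd⟩
        · exact absurd heq (by simp)
        · have hij : i' = j := Sum.inl_injective heq.symm
          subst hij
          subst hu
          rcases l with _ | l'
          · rw [st_zero] at hst
            exact absurd (congrArg Prod.fst (Option.some_inj.mp hst)) (by simp)
          · rcases next1_true (f := f) (g := g) (b := b) with ⟨c, hgc, hn⟩ | ⟨q, hgq, hn⟩
            · rw [st_succ_of_next1 f g hn] at hst
              exact Or.inr ⟨b, hfa, c, hgc, d, ff_iff.mp ⟨l', hst⟩, hfd⟩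
            · rw [st_succ f g, hn] at hst; exact absurd hst (by simp)
  · -- LR
    show (Relation.Comp (fun a b => graphRel f (Sum.inl a) (Sum.inr b))
      (Relation.Comp (Relation.ReflTransGen (Relation.Comp
        (fun a b => graphRel g (Sum.inl a) (Sum.inl b))
        (fun a b => graphRel f (Sum.inr a) (Sum.inr b))))
        (fun a b => graphRel g (Sum.inl a) (Sum.inr b))) i r) ↔ _
    constructor
    · rintro ⟨b, hb, d, hd, hexit⟩
      have hstart : start f g (Sum.inl i : Fin n ⊕ Fin p) = some (true, b) := by
        rw [start, hb]
      obtain ⟨k, hk⟩ : ∃ k, st f g k (true, b) = some (true, d) := tt_iff.mpr hd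
      exact hFun_eq_of_exit hfi hgi hstart hk
        (by simp [step, show g (Sum.inl d) = Sum.inr r from hexit])
    · intro hx
      rcases hfa : f (Sum.inl i) with j' | b
      · have := hFun_direct_l (f := f) (g := g) hfa
        rw [hx] at this
        exact absurd this (by simp)
      · have hstart : start f g (Sum.inl i : Fin n ⊕ Fin p) = some (true, b) := by
          rw [start, hfa]
        obtain ⟨l, u, hl, hst, hstep⟩ := hFun_exit hfi hgi hstart
        rw [hx] at hstep
        rcases step_inr_cases hstep with ⟨d, q, hu, heq, hgd⟩ | ⟨d, i', _, heq, _⟩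
        · have hqr : q = r := Sum.inr_injective heq.symm
          subst hqr
          subst hu
          exact ⟨b, hfa, d, tt_iff.mp ⟨l, hst⟩, hgd⟩
        · exact absurd heq (by simp)
  · -- RL
    show (Relation.Comp (fun a b => graphRel g (Sum.inr a) (Sum.inl b))
      (Relation.Comp (Relation.ReflTransGen (Relation.Comp
        (fun a b => graphRel f (Sum.inr a) (Sum.inr b))
        (fun a b => graphRel g (Sum.inl a) (Sum.inl b))))
        (fun a b => graphRel f (Sum.inr a) (Sum.inl b))) q j) ↔ _
    constructor
    · rintro ⟨b, hb, d, hd, hexit⟩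
      have hstart : start f g (Sum.inr q : Fin n ⊕ Fin p) = some (false, b) := by
        rw [start, hb]
      obtain ⟨k, hk⟩ : ∃ k, st f g k (false, b) = some (false, d) := ff_iff.mpr hd
      exact hFun_eq_of_exit hfi hgi hstart hk
        (by simp [step, show f (Sum.inr d) = Sum.inl j from hexit])
    · intro hx
      rcases hga : g (Sum.inr q) with b | r'
      · have hstart : start f g (Sum.inr q : Fin n ⊕ Fin p) = some (false, b) := by
          rw [start, hga]
        obtain ⟨l, u, hl, hst, hstep⟩ := hFun_exit hfi hgi hstart
        rw [hx] at hstep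
        rcases step_inr_cases hstep with ⟨d, q', _, heq, _⟩ | ⟨d, i', hu, heq, hfd⟩
        · exact absurd heq (by simp)
        · have hij : i' = j := Sum.inl_injective heq.symm
          subst hij
          subst hu
          exact ⟨b, hga, d, ff_iff.mp ⟨l, hst⟩, hfd⟩
      · have := hFun_direct_r (f := f) (g := g) hga
        rw [hx] at this
        exact absurd this (by simp)
  · -- RR
    show (graphRel g (Sum.inr q) (Sum.inr r) ∨ _) ↔ _
    constructor
    · rintro (hscc | ⟨b, hb, c, hc, d, hd, hexit⟩)
      · rw [hFun_direct_r hscc]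
      · have hstart : start f g (Sum.inr q : Fin n ⊕ Fin p) = some (false, b) := by
          rw [start, hb]
        obtain ⟨k, hk⟩ : ∃ k, st f g k (true, c) = some (true, d) := tt_iff.mpr hd
        have hst : st f g (k + 1) (false, b) = some (true, d) := by
          rw [st_succ_of_next1 f g (next1_false_eq hc)]; exact hk
        exact hFun_eq_of_exit hfi hgi hstart hst
          (by simp [step, show g (Sum.inl d) = Sum.inr r from hexit])
    · intro hx
      rcases hga : g (Sum.inr q) with b | r'
      · have hstart : start f g (Sum.inr q : Fin n ⊕ Fin p) = some (false, b) := by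
          rw [start, hga]
        obtain ⟨l, u, hl, hst, hstep⟩ := hFun_exit hfi hgi hstart
        rw [hx] at hstep
        rcases step_inr_cases hstep with ⟨d, q', hu, heq, hgd⟩ | ⟨d, i', _, heq, _⟩
        · have hqr : q' = r := Sum.inr_injective heq.symm
          subst hqr
          subst hu
          rcases l with _ | l'
          · rw [st_zero] at hst
            exact absurd (congrArg Prod.fst (Option.some_inj.mp hst)) (by simp)
          · rcases next1_false (f := f) (g := g) (b := b) with ⟨c, hfc, hn⟩ | ⟨i', hfi', hn⟩
            · rw [st_succ_of_next1 f g hn] at hst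
              exact Or.inr ⟨b, hga, c, hfc, d, tt_iff.mp ⟨l', hst⟩, hgd⟩
            · rw [st_succ f g, hn] at hst; exact absurd hst (by simp)
        · exact absurd heq (by simp)
      · have := hFun_direct_r (f := f) (g := g) hga
        rw [hx] at this
        obtain rfl : r = r' := Sum.inr_injective this
        exact Or.inl hga

end ExecIff

section Parity

lemma even_card_invol {α : Type*} [DecidableEq α] {σ : α → α}
    (hinv : ∀ a, σ (σ a) = a) (hne : ∀ a, σ a ≠ a) :
    ∀ (s : Finset α), (∀ a ∈ s, σ a ∈ s) → Even s.card := by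
  intro s
  induction s using Finset.strongInduction with
  | _ s ih =>
    intro hcl
    rcases Finset.eq_empty_or_nonempty s with rfl | ⟨a, ha⟩
    · simp
    · have hsa : σ a ∈ s := hcl a ha
      have hane : σ a ≠ a := hne a
      set s' := (s.erase a).erase (σ a) with hs'
      have hss : s' ⊂ s := by
        apply Finset.ssubset_of_subset_of_ssubset
        · exact Finset.erase_subset _ _
        · exact Finset.erase_ssubset ha
      have hcl' : ∀ b ∈ s', σ b ∈ s' := by
        intro b hb
        have hb1 : b ∈ s.erase a := Finset.mem_of_mem_erase hb
        have hbne1 : b ≠ σ a := Finset.ne_of_mem_erase hb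
        have hbne2 : b ≠ a := Finset.ne_of_mem_erase hb1
        have hbs : b ∈ s := Finset.mem_of_mem_erase hb1
        have h1 : σ b ≠ a := by
          intro h; rw [← h, hinv] at hbne1; exact hbne1 rfl
        have h2 : σ b ≠ σ a := by
          intro h
          have := congrArg σ h
          rw [hinv, hinv] at this
          exact hbne2 this
        exact Finset.mem_erase.mpr ⟨h2, Finset.mem_erase.mpr ⟨h1, hcl b hbs⟩⟩
      have hcard : s.card = s'.card + 2 := by
        rw [hs', Finset.card_erase_of_mem (Finset.mem_erase.mpr ⟨hane, hsa⟩),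
          Finset.card_erase_of_mem ha]
        have h2 : 2 ≤ s.card := by
          have : ({a, σ a} : Finset α) ⊆ s := by
            intro z hz
            rcases Finset.mem_insert.mp hz with rfl | hz
            · exact ha
            · rw [Finset.mem_singleton.mp hz]; exact hsa
          have := Finset.card_le_card this
          rwa [Finset.card_insert_of_notMem (by simp [hane.symm]),
            Finset.card_singleton] at this
        omega
      rw [hcard]
      obtain ⟨k, hk⟩ := ih s' hss hcl'
      exact ⟨k + 1, by omega⟩

lemma even_natCast_zmod2 {k : ℕ} (h : Even k) : (k : ZMod 2) = 0 := by
  obtain ⟨j, rfl⟩ := h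
  push_cast
  rw [show (j : ZMod 2) + j = 2 * j from by ring]
  rw [show (2 : ZMod 2) = ((2 : ℕ) : ZMod 2) from by norm_cast, ZMod.natCast_self]
  ring

variable {N M : ℕ}

/-- Parity count of elements of `A` lying strictly before `v`. -/
def cnt (A : Finset (Fin N ⊕ Fin M)) (v : Fin N ⊕ Fin M) : ZMod 2 :=
  ((A.filter (fun z => lam N M z < lam N M v)).card : ZMod 2)

lemma cnt_diff {A : Finset (Fin N ⊕ Fin M)} {v w : Fin N ⊕ Fin M}
    (hv : v ∉ A) (hlt : lam N M v < lam N M w) :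
    cnt A w = cnt A v +
      ((A.filter (fun z => lam N M v < lam N M z ∧ lam N M z < lam N M w)).card : ZMod 2) := by
  have hsplit : A.filter (fun z => lam N M z < lam N M w) =
      A.filter (fun z => lam N M z < lam N M v) ∪
      A.filter (fun z => lam N M v < lam N M z ∧ lam N M z < lam N M w) := by
    ext z
    simp only [Finset.mem_filter, Finset.mem_union]
    constructor
    · rintro ⟨hz, hzw⟩
      have hne : lam N M z ≠ lam N M v := fun h => hv (lam_inj h ▸ hz)
      rcases lt_or_gt_of_ne hne with h | h
      · exact Or.inl ⟨hz, h⟩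
      · exact Or.inr ⟨hz, h, hzw⟩
    · rintro (⟨hz, h⟩ | ⟨hz, h1, h2⟩)
      · exact ⟨hz, by omega⟩
      · exact ⟨hz, h2⟩
  have hdisj : Disjoint (A.filter (fun z => lam N M z < lam N M v))
      (A.filter (fun z => lam N M v < lam N M z ∧ lam N M z < lam N M w)) := by
    rw [Finset.disjoint_left]
    intro z hz1 hz2
    rw [Finset.mem_filter] at hz1 hz2
    omega
  rw [cnt, hsplit, Finset.card_union_of_disjoint hdisj]
  push_cast
  rfl

/-- Crossing-parity invariance along an arc of a noncrossing involution. -/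
lemma cnt_eq_of_nc {F : Fin N ⊕ Fin M → Fin N ⊕ Fin M}
    (hnc : NC F) (hinv : Function.Involutive F) (hfp : ∀ z, F z ≠ z)
    {A : Finset (Fin N ⊕ Fin M)} (hcl : ∀ z ∈ A, F z ∈ A)
    {u : Fin N ⊕ Fin M} (hu : u ∉ A) (hw : F u ∉ A) :
    cnt A u = cnt A (F u) := by
  have key : ∀ v : Fin N ⊕ Fin M, v ∉ A → F v ∉ A →
      lam N M v < lam N M (F v) → cnt A v = cnt A (F v) := by
    intro v hv hfv hlt
    rw [cnt_diff hv hlt]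
    have heven : Even ((A.filter (fun z => lam N M v < lam N M z ∧
        lam N M z < lam N M (F v))).card) := by
      apply even_card_invol hinv hfp
      intro z hz
      rw [Finset.mem_filter] at hz ⊢
      obtain ⟨hzA, h1, h2⟩ := hz
      obtain ⟨h3, h4⟩ := hnc v z h1 h2
      exact ⟨hcl z hzA, h3, h4⟩
    rw [even_natCast_zmod2 heven, add_zero]
  have hne : lam N M u ≠ lam N M (F u) := by
    intro h
    exact hfp u (lam_inj h.symm)
  rcases lt_or_gt_of_ne hne with h | h
  · exact key u hu hw h
  · have := key (F u) hw (by rw [hinv]; exact hu) (by rw [hinv]; exact h)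
    rw [hinv] at this
    exact this.symm

lemma cnt_inl (s : Finset (Fin N)) (t : Finset (Fin M)) (v : Fin N) :
    cnt (s.image Sum.inl ∪ t.image Sum.inr) (Sum.inl v) =
      ((s.filter (fun e : Fin N => (e : ℕ) < (v : ℕ))).card : ZMod 2) := by
  rw [cnt, Finset.filter_union, Finset.filter_image, Finset.filter_image]
  have h1 : t.filter (fun a : Fin M => lam N M (Sum.inr a) < lam N M (Sum.inl v)) = ∅ := by
    apply Finset.filter_false_of_mem
    intro c _
    have := lam_inr_ge (n := N) (m := M) c
    have := lam_inl_lt (n := N) (m := M) v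
    omega
  have h2 : s.filter (fun a : Fin N => lam N M (Sum.inl a) < lam N M (Sum.inl v)) =
      s.filter (fun e : Fin N => (e : ℕ) < (v : ℕ)) := by
    apply Finset.filter_congr
    intro a _
    simp only [lam_inl]
  rw [h1, h2, Finset.image_empty, Finset.union_empty,
    Finset.card_image_of_injective _ Sum.inl_injective]

lemma cnt_inr (s : Finset (Fin N)) (t : Finset (Fin M)) (b : Fin M) :
    cnt (s.image Sum.inl ∪ t.image Sum.inr) (Sum.inr b) =
      (s.card : ZMod 2) + ((t.filter (fun c : Fin M => (b : ℕ) < (c : ℕ))).card : ZMod 2) := by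
  rw [cnt, Finset.filter_union, Finset.filter_image, Finset.filter_image]
  have h1 : s.filter (fun a : Fin N => lam N M (Sum.inl a) < lam N M (Sum.inr b)) = s := by
    apply Finset.filter_true_of_mem
    intro e _
    have := lam_inr_ge (n := N) (m := M) b
    have := lam_inl_lt (n := N) (m := M) e
    omega
  have h2 : t.filter (fun c : Fin M => lam N M (Sum.inr c) < lam N M (Sum.inr b)) =
      t.filter (fun c : Fin M => (b : ℕ) < (c : ℕ)) := by
    apply Finset.filter_congr
    intro c _
    simp only [lam_inr_lt_inr]
  rw [h1, h2]
  have hdisj : Disjoint (s.image (Sum.inl : Fin N → Fin N ⊕ Fin M))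
      ((t.filter (fun c : Fin M => (b : ℕ) < (c : ℕ))).image Sum.inr) := by
    rw [Finset.disjoint_left]
    rintro z hz1 hz2
    rw [Finset.mem_image] at hz1 hz2
    obtain ⟨e, _, rfl⟩ := hz1
    obtain ⟨c, _, hc⟩ := hz2
    exact absurd hc (by simp)
  rw [Finset.card_union_of_disjoint hdisj,
    Finset.card_image_of_injective _ Sum.inl_injective,
    Finset.card_image_of_injective _ Sum.inr_injective]
  push_cast
  ring

lemma zmod2_add_self (a : ZMod 2) : a + a = 0 := by
  rw [← two_mul]
  rw [show (2 : ZMod 2) = ((2 : ℕ) : ZMod 2) from by norm_cast, ZMod.natCast_self]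
  ring

lemma filter_flip_parity {M : ℕ} (t : Finset (Fin M)) {b : Fin M} (hb : b ∉ t) :
    ((t.filter (fun c : Fin M => (b : ℕ) < (c : ℕ))).card : ZMod 2) =
      (t.card : ZMod 2) + ((t.filter (fun c : Fin M => (c : ℕ) < (b : ℕ))).card : ZMod 2) := by
  have hsplit : t = t.filter (fun c : Fin M => (c : ℕ) < (b : ℕ)) ∪
      t.filter (fun c : Fin M => (b : ℕ) < (c : ℕ)) := by
    ext c
    simp only [Finset.mem_filter, Finset.mem_union]
    constructor
    · intro hc
      have : (c : ℕ) ≠ (b : ℕ) := by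
        intro h
        exact hb (Fin.ext h ▸ hc)
      rcases lt_or_gt_of_ne this with h | h
      · exact Or.inl ⟨hc, h⟩
      · exact Or.inr ⟨hc, h⟩
    · rintro (⟨hc, _⟩ | ⟨hc, _⟩) <;> exact hc
  have hdisj : Disjoint (t.filter (fun c : Fin M => (c : ℕ) < (b : ℕ)))
      (t.filter (fun c : Fin M => (b : ℕ) < (c : ℕ))) := by
    rw [Finset.disjoint_left]
    intro z hz1 hz2
    rw [Finset.mem_filter] at hz1 hz2
    omega
  have hcards := congrArg Finset.card hsplit
  rw [Finset.card_union_of_disjoint hdisj] at hcards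
  have h2 : ((t.card : ℕ) : ZMod 2) =
      ((t.filter (fun c : Fin M => (c : ℕ) < (b : ℕ))).card : ZMod 2) +
      ((t.filter (fun c : Fin M => (b : ℕ) < (c : ℕ))).card : ZMod 2) := by
    rw [hcards]; push_cast; ring
  rw [h2]
  set X := ((t.filter (fun c : Fin M => (c : ℕ) < (b : ℕ))).card : ZMod 2)
  set Y := ((t.filter (fun c : Fin M => (b : ℕ) < (c : ℕ))).card : ZMod 2)
  have hr : (X + Y) + X = Y + (X + X) := by ring
  rw [hr, zmod2_add_self, add_zero]

end Parity

section ChainSets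

variable {n m p : ℕ} (f : Fin n ⊕ Fin m → Fin n ⊕ Fin m)
  (g : Fin m ⊕ Fin p → Fin m ⊕ Fin p)

def stx (x : Fin n ⊕ Fin p) (l : ℕ) : Option (Bool × Fin m) :=
  (start f g x).bind (fun s => st f g l s)

def cM (x : Fin n ⊕ Fin p) : Finset (Fin m) :=
  Finset.univ.filter (fun b => ∃ t, ∃ l < 2*m+2, stx f g x l = some (t, b))

def EN (x : Fin n ⊕ Fin p) : Finset (Fin n) :=
  Finset.univ.filter (fun i => Sum.inl i = x ∨ Sum.inl i = hFun f g x)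

def EP (x : Fin n ⊕ Fin p) : Finset (Fin p) :=
  Finset.univ.filter (fun q => Sum.inr q = x ∨ Sum.inr q = hFun f g x)

def cF (x : Fin n ⊕ Fin p) : Finset (Fin n ⊕ Fin m) :=
  (EN f g x).image Sum.inl ∪ (cM f g x).image Sum.inr

def cG (x : Fin n ⊕ Fin p) : Finset (Fin m ⊕ Fin p) :=
  (cM f g x).image Sum.inl ∪ (EP f g x).image Sum.inr

def cE (x : Fin n ⊕ Fin p) : Finset (Fin n ⊕ Fin p) :=
  (EN f g x).image Sum.inl ∪ (EP f g x).image Sum.inr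

end ChainSets

section ChainSetLemmas

variable {n m p : ℕ} {f : Fin n ⊕ Fin m → Fin n ⊕ Fin m}
  {g : Fin m ⊕ Fin p → Fin m ⊕ Fin p}

lemma stx_eq {x : Fin n ⊕ Fin p} {s₀} (h : start f g x = some s₀) (l : ℕ) :
    stx f g x l = st f g l s₀ := by
  rw [stx, h, Option.bind_some]

lemma mem_cM {x : Fin n ⊕ Fin p} {b : Fin m} :
    b ∈ cM f g x ↔ ∃ t l, l < 2*m+2 ∧ stx f g x l = some (t, b) := by
  rw [cM, Finset.mem_filter]
  simp only [Finset.mem_univ, true_and]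

lemma mem_EN {x : Fin n ⊕ Fin p} {i : Fin n} :
    i ∈ EN f g x ↔ (Sum.inl i = x ∨ Sum.inl i = hFun f g x) := by
  simp [EN]

lemma mem_EP {x : Fin n ⊕ Fin p} {q : Fin p} :
    q ∈ EP f g x ↔ (Sum.inr q = x ∨ Sum.inr q = hFun f g x) := by
  simp [EP]

lemma inl_mem_cF {x : Fin n ⊕ Fin p} {i : Fin n} :
    Sum.inl i ∈ cF f g x ↔ i ∈ EN f g x := by simp [cF]

lemma inr_mem_cF {x : Fin n ⊕ Fin p} {b : Fin m} :
    Sum.inr b ∈ cF f g x ↔ b ∈ cM f g x := by simp [cF]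

lemma inl_mem_cG {x : Fin n ⊕ Fin p} {b : Fin m} :
    Sum.inl b ∈ cG f g x ↔ b ∈ cM f g x := by simp [cG]

lemma inr_mem_cG {x : Fin n ⊕ Fin p} {q : Fin p} :
    Sum.inr q ∈ cG f g x ↔ q ∈ EP f g x := by simp [cG]

lemma inl_mem_cE {x : Fin n ⊕ Fin p} {i : Fin n} :
    Sum.inl i ∈ cE f g x ↔ i ∈ EN f g x := by simp [cE]

lemma inr_mem_cE {x : Fin n ⊕ Fin p} {q : Fin p} :
    Sum.inr q ∈ cE f g x ↔ q ∈ EP f g x := by simp [cE]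

lemma mem_cM_of {x : Fin n ⊕ Fin p} {b : Fin m} {t l} (h : stx f g x l = some (t, b))
    (hl : l < 2*m+2) : b ∈ cM f g x :=
  mem_cM.mpr ⟨t, l, hl, h⟩

variable (hfi : Function.Involutive f) (hgi : Function.Involutive g)

include hfi hgi in
lemma cont_lt {x : Fin n ⊕ Fin p} {s₀ l u s'} (hsx : start f g x = some s₀)
    (hst : st f g l s₀ = some u) (hs : step f g u = Sum.inl s') :
    l + 1 < 2*m+2 ∧ st f g (l+1) s₀ = some s' := by
  obtain ⟨l₀, u₀, hl₀, hst₀, hstep₀⟩ := hFun_exit hfi hgi hsx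
  have hne : l ≠ l₀ := by
    intro h
    subst h
    rw [hst₀] at hst
    obtain rfl := Option.some_inj.mp hst
    rw [hs] at hstep₀
    exact absurd hstep₀ (by simp)
  have hlt : l < l₀ := by
    rcases lt_or_gt_of_ne hne with h | h
    · exact h
    · exfalso
      have : st f g (l₀ + 1) s₀ = none := by
        rw [st_succ' f g, hst₀, Option.bind_some, next1_none_of_step hstep₀]
      rw [st_none_mono f g this (by omega)] at hst
      exact absurd hst (by simp)
  exact ⟨by omega, by rw [st_succ' f g, hst, Option.bind_some, next1_eq_of_step hs]⟩

include hfi hgi in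
lemma clF {x : Fin n ⊕ Fin p} : ∀ z ∈ cF f g x, f z ∈ cF f g x := by
  intro z hz
  rcases z with i | b
  · rw [inl_mem_cF, mem_EN] at hz
    rcases hz with hxi | hyi
    · subst hxi
      rcases hstart : start f g (Sum.inl i : Fin n ⊕ Fin p) with _ | s₀
      · obtain ⟨j, hj⟩ := start_none_l hstart
        rw [hj, inl_mem_cF, mem_EN]
        exact Or.inr (hFun_direct_l hj).symm
      · rcases start_cases hstart with ⟨i', b₀, hxi', hs₀, hfb⟩ | ⟨q', b₀, hxq', hs₀, hgb⟩
        · obtain rfl : i = i' := Sum.inl_injective hxi'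
          subst hs₀
          rw [hfb, inr_mem_cF]
          exact mem_cM_of (t := true) (l := 0)
            (by rw [stx_eq hstart, st_zero]) (by omega)
        · exact absurd hxq' (by simp)
    · rcases hstart : start f g x with _ | s₀
      · rcases x with i'' | q''
        · obtain ⟨j, hj⟩ := start_none_l hstart
          have hy : hFun f g (Sum.inl i'' : Fin n ⊕ Fin p) = Sum.inl j := hFun_direct_l hj
          rw [hy] at hyi
          obtain rfl : i = j := Sum.inl_injective hyi
          rw [inv_swap hfi hj, inl_mem_cF, mem_EN]
          exact Or.inl rfl
        · obtain ⟨r, hr⟩ := start_none_r hstart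
          have hy : hFun f g (Sum.inr q'' : Fin n ⊕ Fin p) = Sum.inr r := hFun_direct_r hr
          rw [hy] at hyi
          exact absurd hyi (by simp)
      · obtain ⟨l₀, u₀, hl₀, hst₀, hstep₀⟩ := hFun_exit hfi hgi hstart
        rw [← hyi] at hstep₀
        rcases step_inr_cases hstep₀ with ⟨b', q, _, heq, _⟩ | ⟨d, i', hu, heq, hfd⟩
        · exact absurd heq (by simp)
        · obtain rfl : i' = i := Sum.inl_injective heq.symm
          subst hu
          rw [inv_swap hfi hfd, inr_mem_cF]
          exact mem_cM_of (t := false) (l := l₀)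
            (by rw [stx_eq hstart]; exact hst₀) hl₀
  · rw [inr_mem_cF, mem_cM] at hz
    obtain ⟨t, l, hl, hst⟩ := hz
    obtain ⟨s₀, hstart⟩ : ∃ s₀, start f g x = some s₀ := by
      rcases h : start f g x with _ | s₀
      · rw [stx, h] at hst; exact absurd hst (by simp)
      · exact ⟨s₀, rfl⟩
    rw [stx_eq hstart] at hst
    cases t
    · rcases hstf : f (Sum.inr b) with j | b'
      · have hstep : step f g ((false, b) : Bool × Fin m) = Sum.inr (Sum.inl j) := by
          simp [step, hstf]
        have := hFun_eq_of_exit hfi hgi hstart hst hstep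
        rw [inl_mem_cF, mem_EN]
        exact Or.inr this.symm
      · have hstep : step f g ((false, b) : Bool × Fin m) = Sum.inl (true, b') := by
          simp [step, hstf]
        obtain ⟨hlt, hst'⟩ := cont_lt hfi hgi hstart hst hstep
        rw [inr_mem_cF]
        exact mem_cM_of (t := true) (l := l+1) (by rw [stx_eq hstart]; exact hst') hlt
    · rcases l with _ | l'
      · rw [st_zero] at hst
        have hs₀ : s₀ = (true, b) := Option.some_inj.mp hst
        rcases start_cases hstart with ⟨i', b₀, hxi', hs₀', hfb⟩ | ⟨q', b₀, hxq', hs₀', hgb⟩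
        · rw [hs₀] at hs₀'
          obtain rfl : b₀ = b := congrArg Prod.snd hs₀'.symm
          rw [inv_swap hfi hfb, inl_mem_cF, mem_EN]
          exact Or.inl hxi'.symm
        · rw [hs₀] at hs₀'
          exact absurd (congrArg Prod.fst hs₀') (by simp)
      · rw [st_succ' f g] at hst
        rcases hw : st f g l' s₀ with _ | w
        · rw [hw] at hst; exact absurd hst (by simp)
        rw [hw, Option.bind_some] at hst
        rcases next1_some_cases hst with ⟨c, b', _, heq, _⟩ | ⟨c, b', hwc, heq, hfc⟩
        · exact absurd (congrArg Prod.fst heq) (by simp)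
        · obtain rfl : b' = b := (congrArg Prod.snd heq).symm
          subst hwc
          rw [inv_swap hfi hfc, inr_mem_cF]
          exact mem_cM_of (t := false) (l := l')
            (by rw [stx_eq hstart]; exact hw) (by omega)

include hfi hgi in
lemma clG {x : Fin n ⊕ Fin p} : ∀ z ∈ cG f g x, g z ∈ cG f g x := by
  intro z hz
  rcases z with b | q
  · rw [inl_mem_cG, mem_cM] at hz
    obtain ⟨t, l, hl, hst⟩ := hz
    obtain ⟨s₀, hstart⟩ : ∃ s₀, start f g x = some s₀ := by
      rcases h : start f g x with _ | s₀
      · rw [stx, h] at hst; exact absurd hst (by simp)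
      · exact ⟨s₀, rfl⟩
    rw [stx_eq hstart] at hst
    cases t
    · rcases l with _ | l'
      · rw [st_zero] at hst
        have hs₀ : s₀ = (false, b) := Option.some_inj.mp hst
        rcases start_cases hstart with ⟨i', b₀, hxi', hs₀', hfb⟩ | ⟨q', b₀, hxq', hs₀', hgb⟩
        · rw [hs₀] at hs₀'
          exact absurd (congrArg Prod.fst hs₀') (by simp)
        · rw [hs₀] at hs₀'
          obtain rfl : b₀ = b := congrArg Prod.snd hs₀'.symm
          rw [inv_swap hgi hgb, inr_mem_cG, mem_EP]
          exact Or.inl hxq'.symm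
      · rw [st_succ' f g] at hst
        rcases hw : st f g l' s₀ with _ | w
        · rw [hw] at hst; exact absurd hst (by simp)
        rw [hw, Option.bind_some] at hst
        rcases next1_some_cases hst with ⟨c, b', hwc, heq, hgc⟩ | ⟨c, b', _, heq, _⟩
        · obtain rfl : b' = b := (congrArg Prod.snd heq).symm
          subst hwc
          rw [inv_swap hgi hgc, inl_mem_cG]
          exact mem_cM_of (t := true) (l := l')
            (by rw [stx_eq hstart]; exact hw) (by omega)
        · exact absurd (congrArg Prod.fst heq) (by simp)
    · rcases hstg : g (Sum.inl b) with b' | q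
      · have hstep : step f g ((true, b) : Bool × Fin m) = Sum.inl (false, b') := by
          simp [step, hstg]
        obtain ⟨hlt, hst'⟩ := cont_lt hfi hgi hstart hst hstep
        rw [inl_mem_cG]
        exact mem_cM_of (t := false) (l := l+1) (by rw [stx_eq hstart]; exact hst') hlt
      · have hstep : step f g ((true, b) : Bool × Fin m) = Sum.inr (Sum.inr q) := by
          simp [step, hstg]
        have := hFun_eq_of_exit hfi hgi hstart hst hstep
        rw [inr_mem_cG, mem_EP]
        exact Or.inr this.symm
  · rw [inr_mem_cG, mem_EP] at hz
    rcases hz with hxq | hyq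
    · subst hxq
      rcases hstart : start f g (Sum.inr q : Fin n ⊕ Fin p) with _ | s₀
      · obtain ⟨r, hr⟩ := start_none_r hstart
        rw [hr, inr_mem_cG, mem_EP]
        exact Or.inr (hFun_direct_r hr).symm
      · rcases start_cases hstart with ⟨i', b₀, hxi', hs₀, hfb⟩ | ⟨q', b₀, hxq', hs₀, hgb⟩
        · exact absurd hxi' (by simp)
        · obtain rfl : q = q' := Sum.inr_injective hxq'
          subst hs₀
          rw [hgb, inl_mem_cG]
          exact mem_cM_of (t := false) (l := 0)
            (by rw [stx_eq hstart, st_zero]) (by omega)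
    · rcases hstart : start f g x with _ | s₀
      · rcases x with i'' | q''
        · obtain ⟨j, hj⟩ := start_none_l hstart
          have hy : hFun f g (Sum.inl i'' : Fin n ⊕ Fin p) = Sum.inl j := hFun_direct_l hj
          rw [hy] at hyq
          exact absurd hyq (by simp)
        · obtain ⟨r, hr⟩ := start_none_r hstart
          have hy : hFun f g (Sum.inr q'' : Fin n ⊕ Fin p) = Sum.inr r := hFun_direct_r hr
          rw [hy] at hyq
          obtain rfl : q = r := Sum.inr_injective hyq
          rw [inv_swap hgi hr, inr_mem_cG, mem_EP]
          exact Or.inl rfl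
      · obtain ⟨l₀, u₀, hl₀, hst₀, hstep₀⟩ := hFun_exit hfi hgi hstart
        rw [← hyq] at hstep₀
        rcases step_inr_cases hstep₀ with ⟨d, q', hu, heq, hgd⟩ | ⟨d, i', _, heq, _⟩
        · obtain rfl : q' = q := Sum.inr_injective heq.symm
          subst hu
          rw [inv_swap hgi hgd, inl_mem_cG]
          exact mem_cM_of (t := true) (l := l₀)
            (by rw [stx_eq hstart]; exact hst₀) hl₀
        · exact absurd heq (by simp)

include hfi hgi in
lemma chain_origin_unique {x x' : Fin n ⊕ Fin p} {j j' s}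
    (h : stx f g x j = some s) (h' : stx f g x' j' = some s) : x = x' := by
  obtain ⟨s₀, hs₀⟩ : ∃ s₀, start f g x = some s₀ := by
    rcases hh : start f g x with _ | s₀
    · rw [stx, hh] at h; exact absurd h (by simp)
    · exact ⟨s₀, rfl⟩
  obtain ⟨s₀', hs₀'⟩ : ∃ s₀', start f g x' = some s₀' := by
    rcases hh : start f g x' with _ | s₀'
    · rw [stx, hh] at h'; exact absurd h' (by simp)
    · exact ⟨s₀', rfl⟩
  rw [stx_eq hs₀] at h
  rw [stx_eq hs₀'] at h'
  have hb := bIter_of_st hfi hgi h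
  have hb' := bIter_of_st hfi hgi h'
  have key : ∀ (a b : ℕ) (w w' : Bool × Fin m), a ≤ b → bIter f g a s = some w →
      bIter f g b s = some w' → back f g w = none → a = b := by
    intro a b w w' hab ha hbb hbw
    by_contra hne
    have h1 : b = a + (b - a) := by omega
    rw [h1, bIter_add, ha, Option.bind_some] at hbb
    obtain ⟨c, hc⟩ : ∃ c, b - a = c + 1 := ⟨b - a - 1, by omega⟩
    rw [hc, show c + 1 = 1 + c from by omega, bIter_add] at hbb
    have : bIter f g 1 w = none := by
      rw [bIter_succ_front, hbw]
    rw [this] at hbb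
    exact absurd hbb (by simp)
  have hbn : back f g s₀ = none := start_back_none hfi hgi hs₀
  have hbn' : back f g s₀' = none := start_back_none hfi hgi hs₀'
  rcases le_total j j' with hle | hle
  · have := key j j' s₀ s₀' hle hb hb' hbn
    subst this
    rw [hb] at hb'
    rw [Option.some_inj.mp hb'] at hs₀
    exact start_inj hfi hgi hs₀ hs₀'
  · have := key j' j s₀' s₀ hle hb' hb hbn'
    subst this
    rw [hb] at hb'
    rw [Option.some_inj.mp hb'] at hs₀
    exact start_inj hfi hgi hs₀ hs₀'

include hfi hgi in
lemma chain_flip {x : Fin n ⊕ Fin p} {s₀ j s} (hsx : start f g x = some s₀)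
    (h : st f g j s₀ = some s) :
    ∃ j', j' < 2*m+2 ∧ stx f g (hFun f g x) j' = some (flipSt s) := by
  obtain ⟨l₀, u₀, hl₀, hst₀, hstep₀⟩ := hFun_exit hfi hgi hsx
  have hjl : j ≤ l₀ := by
    by_contra hj
    have : st f g (l₀ + 1) s₀ = none := by
      rw [st_succ' f g, hst₀, Option.bind_some, next1_none_of_step hstep₀]
    rw [st_none_mono f g this (by omega)] at h
    exact absurd h (by simp)
  have hdec : st f g (l₀ - j) s = some u₀ := by
    have h1 : l₀ = j + (l₀ - j) := by omega
    rw [h1, st_add, h, Option.bind_some] at hst₀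
    exact hst₀
  have hrev := st_rev hfi hgi hdec
  have hstart' : start f g (hFun f g x) = some (flipSt u₀) := start_of_exit hfi hgi hstep₀
  exact ⟨l₀ - j, by omega, by rw [stx_eq hstart']; exact hrev⟩

include hfi hgi in
lemma cM_disj {x x' : Fin n ⊕ Fin p} {b : Fin m} (h1 : x' ≠ x) (h2 : x' ≠ hFun f g x)
    (hb : b ∈ cM f g x) (hb' : b ∈ cM f g x') : False := by
  obtain ⟨t, l, hl, hst⟩ := mem_cM.mp hb
  obtain ⟨t', l', hl', hst'⟩ := mem_cM.mp hb'
  by_cases ht : t' = t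
  · subst ht
    exact h1 (chain_origin_unique hfi hgi hst' hst).symm.symm |>.elim
  · have hflip : (t', b) = flipSt (t, b) := by
      rcases t with _ | _ <;> rcases t' with _ | _ <;> simp_all [flipSt]
    obtain ⟨s₀, hs₀⟩ : ∃ s₀, start f g x = some s₀ := by
      rcases hh : start f g x with _ | s₀
      · rw [stx, hh] at hst; exact absurd hst (by simp)
      · exact ⟨s₀, rfl⟩
    rw [stx_eq hs₀] at hst
    obtain ⟨j', hj', hstf⟩ := chain_flip hfi hgi hs₀ hst
    rw [← hflip] at hstf
    exact h2 (chain_origin_unique hfi hgi hst' hstf)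

end ChainSetLemmas

section Bridges

variable {n m p : ℕ} {f : Fin n ⊕ Fin m → Fin n ⊕ Fin m}
  {g : Fin m ⊕ Fin p → Fin m ⊕ Fin p}
variable (hfi : Function.Involutive f) (hgi : Function.Involutive g)
  (hffp : ∀ z, f z ≠ z) (hgfp : ∀ z, g z ≠ z)
  (hfnc : NC f) (hgnc : NC g)

lemma step_eq_of_next1 {s s'} (h : next1 f g s = some s') : step f g s = Sum.inl s' := by
  rcases hs : step f g s with w | e
  · rw [next1, hs] at h
    rw [Option.some_inj.mp h]
  · rw [next1_none_of_step hs] at h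
    exact absurd h (by simp)

include hfi hgi hffp in
lemma card_cF_zero {x : Fin n ⊕ Fin p} :
    ((EN f g x).card : ZMod 2) + ((cM f g x).card : ZMod 2) = 0 := by
  have he := even_natCast_zmod2 (even_card_invol hfi hffp (cF f g x) (clF hfi hgi))
  have hd : Disjoint ((EN f g x).image (Sum.inl : Fin n → Fin n ⊕ Fin m))
      ((cM f g x).image Sum.inr) := by
    rw [Finset.disjoint_left]
    rintro z hz1 hz2
    rw [Finset.mem_image] at hz1 hz2
    obtain ⟨e, _, rfl⟩ := hz1
    obtain ⟨c, _, hc⟩ := hz2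
    exact absurd hc (by simp)
  rw [cF, Finset.card_union_of_disjoint hd,
    Finset.card_image_of_injective _ Sum.inl_injective,
    Finset.card_image_of_injective _ Sum.inr_injective, Nat.cast_add] at he
  exact he

include hfi hgi hgfp in
lemma card_cG_zero {x : Fin n ⊕ Fin p} :
    ((cM f g x).card : ZMod 2) + ((EP f g x).card : ZMod 2) = 0 := by
  have he := even_natCast_zmod2 (even_card_invol hgi hgfp (cG f g x) (clG hfi hgi))
  have hd : Disjoint ((cM f g x).image (Sum.inl : Fin m → Fin m ⊕ Fin p))
      ((EP f g x).image Sum.inr) := by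
    rw [Finset.disjoint_left]
    rintro z hz1 hz2
    rw [Finset.mem_image] at hz1 hz2
    obtain ⟨e, _, rfl⟩ := hz1
    obtain ⟨c, _, hc⟩ := hz2
    exact absurd hc (by simp)
  rw [cG, Finset.card_union_of_disjoint hd,
    Finset.card_image_of_injective _ Sum.inl_injective,
    Finset.card_image_of_injective _ Sum.inr_injective, Nat.cast_add] at he
  exact he

lemma EQ_E_F {x : Fin n ⊕ Fin p} (v : Fin n) :
    cnt (cE f g x) (Sum.inl v) = cnt (cF f g x) (Sum.inl v) := by
  rw [cE, cF, cnt_inl, cnt_inl]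

include hfi hgi hffp in
lemma EQ_F_G {x : Fin n ⊕ Fin p} {b : Fin m} (hb : b ∉ cM f g x) :
    cnt (cF f g x) (Sum.inr b) = cnt (cG f g x) (Sum.inl b) := by
  rw [cF, cG, cnt_inr, cnt_inl, filter_flip_parity _ hb]
  linear_combination card_cF_zero hfi hgi hffp (x := x)

include hfi hgi hffp hgfp in
lemma EQ_G_E {x : Fin n ⊕ Fin p} (q : Fin p) :
    cnt (cG f g x) (Sum.inr q) = cnt (cE f g x) (Sum.inr q) := by
  rw [cG, cE, cnt_inr, cnt_inr]
  have h1 := card_cF_zero hfi hgi hffp (x := x)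
  have h3 := zmod2_add_self ((cM f g x).card : ZMod 2)
  linear_combination h3 - h1

include hfi hgi hffp hfnc in
lemma C1 {x : Fin n ⊕ Fin p} {u : Fin n ⊕ Fin m} (hu : u ∉ cF f g x)
    (hw : f u ∉ cF f g x) : cnt (cF f g x) u = cnt (cF f g x) (f u) :=
  cnt_eq_of_nc hfnc hfi hffp (clF hfi hgi) hu hw

include hfi hgi hgfp hgnc in
lemma C2 {x : Fin n ⊕ Fin p} {u : Fin m ⊕ Fin p} (hu : u ∉ cG f g x)
    (hw : g u ∉ cG f g x) : cnt (cG f g x) u = cnt (cG f g x) (g u) :=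
  cnt_eq_of_nc hgnc hgi hgfp (clG hfi hgi) hu hw

include hfi hgi hffp hgfp hfnc hgnc in
lemma side_const {x x' : Fin n ⊕ Fin p} (h1 : x' ≠ x) (h2 : x' ≠ hFun f g x) :
    cnt (cE f g x) x' = cnt (cE f g x) (hFun f g x') := by
  have hinvol : ∀ z, hFun f g (hFun f g z) = z := hFun_invol hfi hgi
  have hy'1 : hFun f g x' ≠ x := by
    intro h
    exact h2 ((hinvol x').symm.trans (congrArg (hFun f g) h))
  have hy'2 : hFun f g x' ≠ hFun f g x := by
    intro h
    exact h1 (((hinvol x').symm.trans (congrArg (hFun f g) h)).trans (hinvol x))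
  have hend : ∀ z : Fin n ⊕ Fin p, (z = x' ∨ z = hFun f g x') →
      (z = x ∨ z = hFun f g x) → False := by
    rintro z (rfl | rfl) (h | h)
    · exact h1 h
    · exact h2 h
    · exact hy'1 h
    · exact hy'2 h
  have hEN : ∀ i : Fin n, (Sum.inl i : Fin n ⊕ Fin p) = x' ∨ Sum.inl i = hFun f g x' →
      i ∉ EN f g x := fun i hi hmem => hend _ hi (mem_EN.mp hmem)
  have hEP : ∀ q : Fin p, (Sum.inr q : Fin n ⊕ Fin p) = x' ∨ Sum.inr q = hFun f g x' →
      q ∉ EP f g x := fun q hq hmem => hend _ hq (mem_EP.mp hmem)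
  have hcMd : ∀ b : Fin m, b ∈ cM f g x' → b ∉ cM f g x :=
    fun b hb hbx => cM_disj hfi hgi h1 h2 hbx hb
  rcases hstart' : start f g x' with _ | s₀'
  · rcases x' with i' | q'
    · obtain ⟨j', hj'⟩ := start_none_l hstart'
      have hy' : hFun f g (Sum.inl i' : Fin n ⊕ Fin p) = Sum.inl j' := hFun_direct_l hj'
      rw [hy']
      have hu : (Sum.inl i' : Fin n ⊕ Fin m) ∉ cF f g x := by
        rw [inl_mem_cF]
        exact hEN i' (Or.inl rfl)
      have hw : f (Sum.inl i') ∉ cF f g x := by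
        rw [hj', inl_mem_cF]
        exact hEN j' (Or.inr hy'.symm)
      calc cnt (cE f g x) (Sum.inl i') = cnt (cF f g x) (Sum.inl i') := EQ_E_F i'
        _ = cnt (cF f g x) (f (Sum.inl i')) := C1 hfi hgi hffp hfnc hu hw
        _ = cnt (cF f g x) (Sum.inl j') := by rw [hj']
        _ = cnt (cE f g x) (Sum.inl j') := (EQ_E_F j').symm
    · obtain ⟨r', hr'⟩ := start_none_r hstart'
      have hy' : hFun f g (Sum.inr q' : Fin n ⊕ Fin p) = Sum.inr r' := hFun_direct_r hr'
      rw [hy']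
      have hu : (Sum.inr q' : Fin m ⊕ Fin p) ∉ cG f g x := by
        rw [inr_mem_cG]
        exact hEP q' (Or.inl rfl)
      have hw : g (Sum.inr q') ∉ cG f g x := by
        rw [hr', inr_mem_cG]
        exact hEP r' (Or.inr hy'.symm)
      calc cnt (cE f g x) (Sum.inr q') = cnt (cG f g x) (Sum.inr q') :=
            (EQ_G_E hfi hgi hffp hgfp q').symm
        _ = cnt (cG f g x) (g (Sum.inr q')) := C2 hfi hgi hgfp hgnc hu hw
        _ = cnt (cG f g x) (Sum.inr r') := by rw [hr']
        _ = cnt (cE f g x) (Sum.inr r') := EQ_G_E hfi hgi hffp hgfp r'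
  · -- chain case
    have hMx' : ∀ (l : ℕ) (u : Bool × Fin m), l < 2*m+2 → st f g l s₀' = some u →
        u.2 ∈ cM f g x' := by
      intro l u hl hu
      exact mem_cM_of (t := u.1) (l := l)
        (by rw [stx_eq hstart', hu]) hl
    have hbound : ∀ (l : ℕ) (u : Bool × Fin m), st f g l s₀' = some u → l < 2*m+2 := by
      intro l u hu
      obtain ⟨l₀, u₀, hl₀, hst₀, hstep₀⟩ := hFun_exit hfi hgi hstart'
      have : l ≤ l₀ := by
        by_contra hc
        have hnone : st f g (l₀ + 1) s₀' = none := by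
          rw [st_succ' f g, hst₀, Option.bind_some, next1_none_of_step hstep₀]
        rw [st_none_mono f g hnone (by omega)] at hu
        exact absurd hu (by simp)
      omega
    have hGnotin : ∀ (l : ℕ) (u : Bool × Fin m), st f g l s₀' = some u →
        (Sum.inl u.2 : Fin m ⊕ Fin p) ∉ cG f g x := by
      intro l u hu
      rw [inl_mem_cG]
      exact hcMd _ (hMx' l u (hbound l u hu) hu)
    have hFnotin : ∀ (l : ℕ) (u : Bool × Fin m), st f g l s₀' = some u →
        (Sum.inr u.2 : Fin n ⊕ Fin m) ∉ cF f g x := by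
      intro l u hu
      rw [inr_mem_cF]
      exact hcMd _ (hMx' l u (hbound l u hu) hu)
    have inv : ∀ (l : ℕ) (u : Bool × Fin m), st f g l s₀' = some u →
        cnt (cG f g x) (Sum.inl u.2) = cnt (cE f g x) x' := by
      intro l
      induction l with
      | zero =>
        intro u hu
        rw [st_zero] at hu
        obtain rfl := Option.some_inj.mp hu
        rcases start_cases hstart' with ⟨i', b₀, hx', hs₀, hfb⟩ | ⟨q', b₀, hx', hs₀, hgb⟩
        · subst hs₀
          have hu1 : (Sum.inl i' : Fin n ⊕ Fin m) ∉ cF f g x := by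
            rw [inl_mem_cF]
            exact hEN i' (Or.inl hx'.symm)
          have hw1 : f (Sum.inl i') ∉ cF f g x := by
            rw [hfb]
            exact hFnotin 0 (true, b₀) (st_zero f g _)
          calc cnt (cG f g x) (Sum.inl b₀)
              = cnt (cF f g x) (Sum.inr b₀) :=
                (EQ_F_G hfi hgi hffp (hcMd _ (hMx' 0 (true, b₀) (by omega)
                  (st_zero f g _)))).symm
            _ = cnt (cF f g x) (f (Sum.inl i')) := by rw [hfb]
            _ = cnt (cF f g x) (Sum.inl i') := (C1 hfi hgi hffp hfnc hu1 hw1).symm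
            _ = cnt (cE f g x) (Sum.inl i') := (EQ_E_F i').symm
            _ = cnt (cE f g x) x' := by rw [hx']
        · subst hs₀
          have hu1 : (Sum.inr q' : Fin m ⊕ Fin p) ∉ cG f g x := by
            rw [inr_mem_cG]
            exact hEP q' (Or.inl hx'.symm)
          have hw1 : g (Sum.inr q') ∉ cG f g x := by
            rw [hgb]
            exact hGnotin 0 (false, b₀) (st_zero f g _)
          calc cnt (cG f g x) (Sum.inl b₀)
              = cnt (cG f g x) (g (Sum.inr q')) := by rw [hgb]
            _ = cnt (cG f g x) (Sum.inr q') := (C2 hfi hgi hgfp hgnc hu1 hw1).symm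
            _ = cnt (cE f g x) (Sum.inr q') := EQ_G_E hfi hgi hffp hgfp q'
            _ = cnt (cE f g x) x' := by rw [hx']
      | succ l ih =>
        intro u hu
        rw [st_succ' f g] at hu
        rcases hw : st f g l s₀' with _ | w
        · rw [hw] at hu; exact absurd hu (by simp)
        rw [hw, Option.bind_some] at hu
        have ihw := ih w hw
        rcases next1_some_cases hu with ⟨c, c₂, hwc, huc, hgc⟩ | ⟨c, c₂, hwc, huc, hfc⟩
        · -- g-edge
          subst hwc; subst huc
          have hu1 : (Sum.inl c : Fin m ⊕ Fin p) ∉ cG f g x := hGnotin l (true, c) hw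
          have hw1 : g (Sum.inl c) ∉ cG f g x := by
            rw [hgc]
            exact hGnotin (l+1) (false, c₂) (by rw [st_succ' f g, hw, Option.bind_some, hu])
          calc cnt (cG f g x) (Sum.inl c₂)
              = cnt (cG f g x) (g (Sum.inl c)) := by rw [hgc]
            _ = cnt (cG f g x) (Sum.inl c) := (C2 hfi hgi hgfp hgnc hu1 hw1).symm
            _ = cnt (cE f g x) x' := ihw
        · -- f-edge
          subst hwc; subst huc
          have hu1 : (Sum.inr c : Fin n ⊕ Fin m) ∉ cF f g x := hFnotin l (false, c) hw
          have hw1 : f (Sum.inr c) ∉ cF f g x := by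
            rw [hfc]
            exact hFnotin (l+1) (true, c₂) (by rw [st_succ' f g, hw, Option.bind_some, hu])
          calc cnt (cG f g x) (Sum.inl c₂)
              = cnt (cF f g x) (Sum.inr c₂) := (EQ_F_G hfi hgi hffp
                (hcMd _ (hMx' (l+1) (true, c₂)
                  (hbound (l+1) (true, c₂) (by rw [st_succ' f g, hw, Option.bind_some, hu]))
                  (by rw [st_succ' f g, hw, Option.bind_some, hu])))).symm
            _ = cnt (cF f g x) (f (Sum.inr c)) := by rw [hfc]
            _ = cnt (cF f g x) (Sum.inr c) := (C1 hfi hgi hffp hfnc hu1 hw1).symm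
            _ = cnt (cG f g x) (Sum.inl c) := EQ_F_G hfi hgi hffp
                (hcMd _ (hMx' l (false, c) (hbound l (false, c) hw) hw))
            _ = cnt (cE f g x) x' := ihw
    obtain ⟨l₀, u₀, hl₀, hst₀, hstep₀⟩ := hFun_exit hfi hgi hstart'
    have hbase := inv l₀ u₀ hst₀
    rcases step_inr_cases hstep₀ with ⟨d, q'', hu₀, heq, hgd⟩ | ⟨d, j'', hu₀, heq, hfd⟩
    · subst hu₀
      have hu1 : (Sum.inl d : Fin m ⊕ Fin p) ∉ cG f g x := hGnotin l₀ (true, d) hst₀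
      have hw1 : g (Sum.inl d) ∉ cG f g x := by
        rw [hgd, inr_mem_cG]
        exact hEP q'' (Or.inr heq.symm)
      rw [← hbase, heq]
      calc cnt (cG f g x) (Sum.inl d)
          = cnt (cG f g x) (g (Sum.inl d)) := C2 hfi hgi hgfp hgnc hu1 hw1
        _ = cnt (cG f g x) (Sum.inr q'') := by rw [hgd]
        _ = cnt (cE f g x) (Sum.inr q'') := EQ_G_E hfi hgi hffp hgfp q''
    · subst hu₀
      have hu1 : (Sum.inr d : Fin n ⊕ Fin m) ∉ cF f g x := hFnotin l₀ (false, d) hst₀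
      have hw1 : f (Sum.inr d) ∉ cF f g x := by
        rw [hfd, inl_mem_cF]
        exact hEN j'' (Or.inr heq.symm)
      rw [← hbase, heq]
      calc cnt (cG f g x) (Sum.inl d)
          = cnt (cF f g x) (Sum.inr d) := (EQ_F_G hfi hgi hffp
            (hcMd _ (hMx' l₀ (false, d) hl₀ hst₀))).symm
        _ = cnt (cF f g x) (f (Sum.inr d)) := C1 hfi hgi hffp hfnc hu1 hw1
        _ = cnt (cF f g x) (Sum.inl j'') := by rw [hfd]
        _ = cnt (cE f g x) (Sum.inl j'') := (EQ_E_F j'').symm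

end Bridges

section Final

variable {n m p : ℕ} {f : Fin n ⊕ Fin m → Fin n ⊕ Fin m}
  {g : Fin m ⊕ Fin p → Fin m ⊕ Fin p}
variable (hfi : Function.Involutive f) (hgi : Function.Involutive g)
  (hffp : ∀ z, f z ≠ z) (hgfp : ∀ z, g z ≠ z)
  (hfnc : NC f) (hgnc : NC g)

lemma cE_pair {x z : Fin n ⊕ Fin p} :
    z ∈ cE f g x ↔ (z = x ∨ z = hFun f g x) := by
  rcases z with i | q
  · rw [inl_mem_cE, mem_EN]
  · rw [inr_mem_cE, mem_EP]

lemma cnt_pair {x : Fin n ⊕ Fin p} (hxy : x ≠ hFun f g x) {z : Fin n ⊕ Fin p}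
    (hz1 : z ≠ x) (hz2 : z ≠ hFun f g x) :
    cnt (cE f g x) z =
      (if lam n p x < lam n p z then (1 : ZMod 2) else 0) +
      (if lam n p (hFun f g x) < lam n p z then (1 : ZMod 2) else 0) := by
  have hset : cE f g x = {x, hFun f g x} := by
    ext w
    rw [Finset.mem_insert, Finset.mem_singleton]
    exact cE_pair
  rw [cnt, hset, Finset.filter_insert, Finset.filter_singleton]
  by_cases hx : lam n p x < lam n p z <;>
    by_cases hy : lam n p (hFun f g x) < lam n p z
  · rw [if_pos hx, if_pos hy, if_pos hx, if_pos hy,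
      Finset.card_insert_of_notMem (by simpa using hxy), Finset.card_singleton]
    rw [show ((2:ℕ) : ZMod 2) = 0 from ZMod.natCast_self 2,
      show (1 : ZMod 2) + 1 = 0 from zmod2_add_self 1]
  · rw [if_pos hx, if_neg hy, if_pos hx, if_neg hy,
      Finset.card_insert_of_notMem (by simp), Finset.card_empty]
    norm_num
  · rw [if_neg hx, if_pos hy, if_neg hx, if_pos hy, Finset.card_singleton]
    norm_num
  · rw [if_neg hx, if_neg hy, if_neg hx, if_neg hy, Finset.card_empty]
    norm_num

include hfi hgi hffp hgfp hfnc hgnc in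
lemma nc_hFun : NC (hFun f g) := by
  intro a b ha hb
  have hfpf : ∀ z, hFun f g z ≠ z := hFun_fpf hfi hgi hffp hgfp
  have hinvol : ∀ z, hFun f g (hFun f g z) = z := hFun_invol hfi hgi
  have hay : a ≠ hFun f g a := fun h => hfpf a h.symm
  have hba : b ≠ a := by
    intro h; rw [h] at ha; exact lt_irrefl _ ha
  have hby : b ≠ hFun f g a := by
    intro h; rw [h] at hb; exact lt_irrefl _ hb
  have hb2a : hFun f g b ≠ a := by
    intro h
    exact hby (((hinvol b).symm.trans (congrArg (hFun f g) h)).symm ▸ rfl)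
  have hb2y : hFun f g b ≠ hFun f g a := by
    intro h
    exact hba ((hinvol b).symm.trans ((congrArg (hFun f g) h).trans (hinvol a)))
  have hside := side_const hfi hgi hffp hgfp hfnc hgnc (x := a) (x' := b) hba hby
  rw [cnt_pair hay hba hby, cnt_pair hay hb2a hb2y] at hside
  rw [if_pos ha, if_neg (by omega)] at hside
  -- hside : 1 + 0 = [a < hb] + [y < hb]
  have hne1 : lam n p (hFun f g b) ≠ lam n p a := fun h => hb2a (lam_inj h)
  have hne2 : lam n p (hFun f g b) ≠ lam n p (hFun f g a) := fun h => hb2y (lam_inj h)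
  rcases lt_trichotomy (lam n p (hFun f g b)) (lam n p a) with hlow | heq | hmid
  · exfalso
    rw [if_neg (by omega), if_neg (by omega)] at hside
    norm_num at hside
  · exact absurd heq hne1
  · refine ⟨hmid, ?_⟩
    rcases lt_trichotomy (lam n p (hFun f g b)) (lam n p (hFun f g a)) with h' | h' | h'
    · exact h'
    · exact absurd h' hne2
    · exfalso
      rw [if_pos (by omega), if_pos (by omega)] at hside
      rw [show (1 : ZMod 2) + 1 = 0 from zmod2_add_self 1] at hside
      norm_num at hside

end Final

end Stmt7

/-- If `f ∈ P(n,m)` and `g ∈ P(m,p)` are planar involutions, then the composite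
involution `θ = f;g` defined by the execution formula is again planar, i.e.
`θ ∈ P(n,p)`. -/
theorem stmt_7 (n m p : ℕ) (f : Fin n ⊕ Fin m → Fin n ⊕ Fin m)
    (g : Fin m ⊕ Fin p → Fin m ⊕ Fin p) (hf : Planar f) (hg : Planar g) :
    ∃ h : Fin n ⊕ Fin p → Fin n ⊕ Fin p,
      Planar h ∧ ∀ x y, ExecR (graphRel f) (graphRel g) x y ↔ h x = y := by
  have hfnc := Stmt7.planar_nc hf
  have hgnc := Stmt7.planar_nc hg
  obtain ⟨⟨hfi, hffp⟩, _, _⟩ := hf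
  obtain ⟨⟨hgi, hgfp⟩, _, _⟩ := hg
  refine ⟨Stmt7.hFun f g, ?_, Stmt7.execR_iff_hFun hfi hgi⟩
  have hinv : Function.Involutive (Stmt7.hFun f g) := Stmt7.hFun_invol hfi hgi
  have hnc : Stmt7.NC (Stmt7.hFun f g) :=
    Stmt7.nc_hFun hfi hgi hffp hgfp hfnc hgnc
  obtain ⟨h1, h2⟩ := Stmt7.nc_planar hinv hnc
  exact ⟨⟨hinv, Stmt7.hFun_fpf hfi hgi hffp hgfp⟩, h1, h2⟩
end

section
/- The execution-formula composition of planar involutions is associative: for f ∈ P(n,m), g ∈ P(m,p), h ∈ P(p,q), (f;g);h = f;(g;h). -/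
open Sum Relation

/-- The execution-formula composite of two involutions, as a function: for
planar involutions the execution relation is the graph of a function, and
`execFun f g` is that function. -/
noncomputable def execFun {n m p : ℕ} (f : Fin n ⊕ Fin m → Fin n ⊕ Fin m)
    (g : Fin m ⊕ Fin p → Fin m ⊕ Fin p) : Fin n ⊕ Fin p → Fin n ⊕ Fin p :=
  fun x =>
    @dite _ (∃ y, ExecR (graphRel f) (graphRel g) x y) (Classical.propDecidable _)
      (fun h => h.choose) (fun _ => x)

/-- The partial bijection `Cyc(f,g) = f_{m,m} ; g_{m,m}` on `[m]`:
relational composition of the caps of `f` with the cups of `g`. -/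
def Cyc {n m p : ℕ} (f : Fin n ⊕ Fin m → Fin n ⊕ Fin m)
    (g : Fin m ⊕ Fin p → Fin m ⊕ Fin p) : Fin m → Fin m → Prop :=
  Relation.Comp (fun i j => f (Sum.inr i) = Sum.inr j)
    (fun i j => g (Sum.inl i) = Sum.inl j)

/-- Iterated relational composition `r^k` (with `r^0` the identity). -/
def relPow {α : Type*} (r : α → α → Prop) : ℕ → α → α → Prop
  | 0 => Eq
  | k + 1 => Relation.Comp r (relPow r k)

/-- `i` is a cyclic element of `r`: `r^k i i` for some `k > 0`. -/
def Cyclic {α : Type*} (r : α → α → Prop) (i : α) : Prop :=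
  ∃ k, 0 < k ∧ relPow r k i i

/-- The cycle (orbit) of `i` under `r`. -/
def cycleOf {α : Type*} (r : α → α → Prop) (i : α) : Set α :=
  {j | ∃ k, relPow r k i j}

/-- `Z(f,g)`: the number of distinct cycles of `Cyc(f,g)`. -/
noncomputable def Z {n m p : ℕ} (f : Fin n ⊕ Fin m → Fin n ⊕ Fin m)
    (g : Fin m ⊕ Fin p → Fin m ⊕ Fin p) : ℕ :=
  {S : Set (Fin m) | ∃ i, Cyclic (Cyc f g) i ∧ S = cycleOf (Cyc f g) i}.ncard

/-- A morphism `n → m` of the Temperley-Lieb category: a loop count together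
with a function on `[n] ⊕ [m]` (required to be a planar involution for
genuine morphisms). -/
def TLHom (n m : ℕ) : Type :=
  ℕ × (Fin n ⊕ Fin m → Fin n ⊕ Fin m)

/-- Composition in the Temperley-Lieb category:
`(t, g) ∘ (s, f) = (s + t + Z(f,g), f;g)`. -/
noncomputable def TLcomp {n m p : ℕ} (F : TLHom n m) (G : TLHom m p) : TLHom n p :=
  (F.1 + G.1 + Z F.2 G.2, execFun F.2 G.2)

/-- The identity morphism: zero loops and the twist involution `i ↔ i'`. -/
def tlid (n : ℕ) : TLHom n n :=
  (0, Sum.swap)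

/-!
Associativity already holds for the execution formula `ExecR` on arbitrary relations: each of
the four blocks of `ExecR (ExecR R S) T = ExecR R (ExecR S T)` is an identity of Kleene algebra,
obtained from the sliding rule `p (q p)* = (p q)* p` and the denesting rule
`(x ∪ y)* = x* (y x*)*`.

For injective `f`, `g` with a finite middle interface, `ExecR (graphRel f) (graphRel g)` is the
graph of a function, namely `execFun f g`: a token entering the interface bounces along a partial
injection of a finite set, starting at a point without predecessor, so it cannot cycle and leaves
at a unique exit. The converse of an execution is the execution of the converses, so
`execFun f g` is again an involution, and the graph description applies to both sides of the
theorem.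
-/

local infixr:80 " ∘r " => Relation.Comp
local postfix:max "∗" => Relation.ReflTransGen
-- `R⟦inl, inr⟧` is the block `R_{A,B}` of a relation `R` on `A ⊕ B`.
local notation:max R "⟦" x ", " y "⟧" => fun i j => R (x i) (y j)

namespace Relation

variable {α β γ : Type*}

theorem comp_sup (r : α → β → Prop) (p q : β → γ → Prop) :
    r ∘r (p ⊔ q) = r ∘r p ⊔ r ∘r q := by
  ext a c
  simp only [Comp, Pi.sup_apply, sup_Prop_eq, ← exists_or, and_or_left]

theorem sup_comp (p q : α → β → Prop) (r : β → γ → Prop) :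
    (p ⊔ q) ∘r r = p ∘r r ⊔ q ∘r r := by
  ext a c
  simp only [Comp, Pi.sup_apply, sup_Prop_eq, ← exists_or, or_and_right]

theorem comp_reflTransGen_comp (p : α → β → Prop) (q : β → α → Prop) :
    p ∘r (q ∘r p)∗ = (p ∘r q)∗ ∘r p := by
  ext a b
  constructor
  · rintro ⟨b', hp, hqp⟩
    induction hqp with
    | refl => exact ⟨a, .refl, hp⟩
    | tail _ hqp ih =>
      obtain ⟨m, hq, hp'⟩ := hqp
      obtain ⟨a', hpq, hp''⟩ := ih
      exact ⟨m, hpq.tail ⟨_, hp'', hq⟩, hp'⟩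
  · rintro ⟨a', hpq, hp⟩
    induction hpq generalizing b with
    | refl => exact ⟨b, hp, .refl⟩
    | tail _ hpq ih =>
      obtain ⟨m, hp', hq⟩ := hpq
      obtain ⟨b', hp'', hqp⟩ := ih m hp'
      exact ⟨b', hp'', hqp.tail ⟨_, hq, hp⟩⟩

theorem reflTransGen_sup (x y : α → α → Prop) : (x ⊔ y)∗ = x∗ ∘r (y ∘r x∗)∗ := by
  ext a b
  constructor
  · intro h
    induction h with
    | refl => exact ⟨a, .refl, .refl⟩
    | tail _ hxy ih =>
      obtain ⟨m, hx, hyx⟩ := ih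
      rcases hxy with hx' | hy'
      · rcases hyx.cases_tail with rfl | ⟨c, hyx', u, hy, hx''⟩
        · exact ⟨_, hx.tail hx', .refl⟩
        · exact ⟨m, hx, hyx'.tail ⟨u, hy, hx''.tail hx'⟩⟩
      · exact ⟨m, hx, hyx.tail ⟨_, hy', .refl⟩⟩
  · rintro ⟨m, hx, hyx⟩
    have lift_x : x∗ ≤ (x ⊔ y)∗ := ReflTransGen.mono fun _ _ => Or.inl
    refine (lift_x _ _ hx).trans ?_
    induction hyx with
    | refl => exact .refl
    | tail _ hyx ih =>
      obtain ⟨u, hy, hx'⟩ := hyx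
      exact (ih.tail (Or.inr hy)).trans (lift_x _ _ hx')

theorem comp_reflTransGen_eq_sup (k : α → β → Prop) (x : β → β → Prop) :
    k ∘r x∗ = k ⊔ k ∘r x ∘r x∗ := by
  ext a c
  simp only [Comp, Pi.sup_apply, sup_Prop_eq]
  constructor
  · rintro ⟨b, hk, hx⟩
    rcases hx.cases_head with rfl | ⟨b', hx', hx''⟩
    · exact .inl hk
    · exact .inr ⟨b, hk, b', hx', hx''⟩
  · rintro (hk | ⟨b, hk, b', hx', hx''⟩)
    · exact ⟨c, hk, .refl⟩
    · exact ⟨b, hk, hx''.head hx'⟩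

theorem reflTransGen_comp_eq_sup (x : α → α → Prop) (k : α → β → Prop) :
    x∗ ∘r k = k ⊔ x∗ ∘r x ∘r k := by
  ext a c
  simp only [Comp, Pi.sup_apply, sup_Prop_eq]
  constructor
  · rintro ⟨b, hx, hk⟩
    rcases hx.cases_tail with rfl | ⟨b', hx', hx''⟩
    · exact .inl hk
    · exact .inr ⟨b', hx', b, hx'', hk⟩
  · rintro (hk | ⟨b, hx, b', hx', hk⟩)
    · exact ⟨a, .refl, hk⟩
    · exact ⟨b', hx.tail hx', hk⟩

theorem comp_reflTransGen_comp_assoc (p : α → β → Prop) (q : β → α → Prop)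
    (k : β → γ → Prop) : p ∘r (q ∘r p)∗ ∘r k = (p ∘r q)∗ ∘r p ∘r k := by
  rw [← comp_assoc, comp_reflTransGen_comp, comp_assoc]

-- Existence: otherwise the successor map would be an injective, hence surjective, self-map of
-- the finite set of points reachable from `a`, and `a` would have a predecessor.
theorem existsUnique_reflTransGen_comp [Finite α] {p : α → α → Prop}
    {q : α → β → Prop} (hp : Relator.RightUnique p) (hp' : Relator.LeftUnique p)
    (hq : Relator.RightUnique q) (hpq : ∀ a, (∃ b, p a b) ↔ ¬ ∃ y, q a y) {a : α}
    (ha : ∀ b, ¬ p b a) : ∃! y, (p∗ ∘r q) a y := by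
  obtain ⟨y, hy⟩ : ∃ y, (p∗ ∘r q) a y := by
    by_contra! hstuck
    have step (b : {b // p∗ a b}) : ∃ c : {b // p∗ a b}, p b c := by
      obtain ⟨c, hc⟩ := (hpq b).2 fun ⟨y, hy⟩ => hstuck y ⟨b, b.2, hy⟩
      exact ⟨⟨c, b.2.tail hc⟩, hc⟩
    choose σ hσ using step
    have hσ_inj : σ.Injective := fun b b' h =>
      Subtype.ext (hp' (hσ b) (h ▸ hσ b'))
    obtain ⟨b, hb⟩ := Finite.surjective_of_injective hσ_inj ⟨a, .refl⟩
    exact ha b (by simpa [hb] using hσ b)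
  refine ⟨y, hy, fun y' ⟨b', hab', hy'⟩ => ?_⟩
  obtain ⟨b, hab, hy⟩ := hy
  have exit_unique {b b' : α} {y y' : β} (hbb' : p∗ b b') (hy : q b y) (hy' : q b' y') :
      y = y' := by
    rcases hbb'.cases_head with rfl | ⟨c, hbc, -⟩
    · exact hq hy hy'
    · exact absurd ⟨y, hy⟩ ((hpq b).1 ⟨c, hbc⟩)
  rcases ReflTransGen.total_of_right_unique hp hab hab' with h | h
  · exact (exit_unique h hy hy').symm
  · exact exit_unique h hy' hy

end Relation

section ExecAssoc

variable {A B C D : Type*}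

/- In the next two lemmas `a, b, r` stand for the blocks `R_{AB}, R_{BA}, R_{BB}` of `R`,
`s, c, d, e` for `S_{BB}, S_{BC}, S_{CB}, S_{CC}`, and `t, u` for `T_{CC}, T_{CD}`. -/

theorem execR_assoc_offDiag (a : A → B → Prop) (r s : B → B → Prop) (c : B → C → Prop)
    (d : C → B → Prop) (e t : C → C → Prop) (u : C → D → Prop) :
    (a ∘r (s ∘r r)∗ ∘r c) ∘r (t ∘r (e ⊔ d ∘r r ∘r (s ∘r r)∗ ∘r c))∗ ∘r u =
      a ∘r ((s ⊔ c ∘r t ∘r (e ∘r t)∗ ∘r d) ∘r r)∗ ∘r c ∘r (t ∘r e)∗ ∘r u :=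
  calc (a ∘r (s ∘r r)∗ ∘r c) ∘r (t ∘r (e ⊔ d ∘r r ∘r (s ∘r r)∗ ∘r c))∗ ∘r u
    _ = a ∘r (s ∘r r)∗ ∘r c ∘r (t ∘r e)∗ ∘r
          (t ∘r d ∘r r ∘r (s ∘r r)∗ ∘r c ∘r (t ∘r e)∗)∗ ∘r u := by
      rw [comp_sup, reflTransGen_sup]; simp only [comp_assoc]
    _ = a ∘r (s ∘r r)∗ ∘r (c ∘r (t ∘r e)∗ ∘r t ∘r d ∘r r ∘r (s ∘r r)∗)∗ ∘r
          c ∘r (t ∘r e)∗ ∘r u := by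
      simpa only [comp_assoc] using congrArg (a ∘r (s ∘r r)∗ ∘r · ∘r u)
        (comp_reflTransGen_comp (c ∘r (t ∘r e)∗) (t ∘r d ∘r r ∘r (s ∘r r)∗))
    _ = a ∘r (s ∘r r ⊔ c ∘r (t ∘r e)∗ ∘r t ∘r d ∘r r)∗ ∘r c ∘r (t ∘r e)∗ ∘r u := by
      rw [reflTransGen_sup]; simp only [comp_assoc]
    _ = a ∘r ((s ⊔ c ∘r t ∘r (e ∘r t)∗ ∘r d) ∘r r)∗ ∘r c ∘r (t ∘r e)∗ ∘r u := by
      simp only [sup_comp, comp_assoc, comp_reflTransGen_comp_assoc]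

theorem execR_assoc_diag (z : A → A → Prop) (a : A → B → Prop) (b : B → A → Prop)
    (r s : B → B → Prop) (c : B → C → Prop) (d : C → B → Prop) (e t : C → C → Prop) :
    (z ⊔ a ∘r s ∘r (r ∘r s)∗ ∘r b) ⊔
        (a ∘r (s ∘r r)∗ ∘r c) ∘r t ∘r ((e ⊔ d ∘r r ∘r (s ∘r r)∗ ∘r c) ∘r t)∗ ∘r
          d ∘r (r ∘r s)∗ ∘r b =
      z ⊔ a ∘r (s ⊔ c ∘r t ∘r (e ∘r t)∗ ∘r d) ∘r
        (r ∘r (s ⊔ c ∘r t ∘r (e ∘r t)∗ ∘r d))∗ ∘r b := by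
  set w := c ∘r t ∘r (e ∘r t)∗ ∘r d
  set K := (w ∘r r ∘r (s ∘r r)∗)∗
  have inner : c ∘r t ∘r ((e ⊔ d ∘r r ∘r (s ∘r r)∗ ∘r c) ∘r t)∗ ∘r d ∘r (r ∘r s)∗ ∘r b =
      K ∘r w ∘r (r ∘r s)∗ ∘r b := by
    rw [sup_comp, reflTransGen_sup]
    simpa only [K, w, comp_assoc] using congrArg (· ∘r d ∘r (r ∘r s)∗ ∘r b)
      (comp_reflTransGen_comp (c ∘r t ∘r (e ∘r t)∗) (d ∘r r ∘r (s ∘r r)∗))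
  have key : s ⊔ K ∘r w ∘r (r ∘r s)∗ = K ∘r (s ⊔ w) :=
    calc s ⊔ K ∘r w ∘r (r ∘r s)∗
      _ = K ∘r w ⊔ (s ⊔ K ∘r (w ∘r r ∘r (s ∘r r)∗) ∘r s) := by
        rw [comp_reflTransGen_eq_sup w, comp_sup, sup_left_comm]
        simp only [comp_assoc]
        rw [comp_reflTransGen_comp s r]
      _ = K ∘r (s ⊔ w) := by
        rw [← reflTransGen_comp_eq_sup, comp_sup, sup_comm]
  calc (z ⊔ a ∘r s ∘r (r ∘r s)∗ ∘r b) ⊔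
        (a ∘r (s ∘r r)∗ ∘r c) ∘r t ∘r ((e ⊔ d ∘r r ∘r (s ∘r r)∗ ∘r c) ∘r t)∗ ∘r
          d ∘r (r ∘r s)∗ ∘r b
    _ = z ⊔ a ∘r (s ∘r r)∗ ∘r (s ⊔ K ∘r w ∘r (r ∘r s)∗) ∘r b := by
      rw [sup_assoc, comp_assoc, comp_assoc, inner]
      simp only [comp_sup, sup_comp, comp_assoc, comp_reflTransGen_comp_assoc]
    _ = z ⊔ a ∘r ((s ⊔ w) ∘r r)∗ ∘r (s ⊔ w) ∘r b := by
      rw [key, sup_comp, reflTransGen_sup]; simp only [K, comp_assoc]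
    _ = z ⊔ a ∘r (s ⊔ w) ∘r (r ∘r (s ⊔ w))∗ ∘r b := by
      rw [comp_reflTransGen_comp_assoc]

theorem execR_assoc (R : A ⊕ B → A ⊕ B → Prop) (S : B ⊕ C → B ⊕ C → Prop)
    (T : C ⊕ D → C ⊕ D → Prop) : ExecR (ExecR R S) T = ExecR R (ExecR S T) := by
  ext x y
  rcases x with i | i <;> rcases y with j | j
  · exact iff_of_eq <| congr_fun₂ (execR_assoc_diag R⟦inl, inl⟧ R⟦inl, inr⟧ R⟦inr, inl⟧
      R⟦inr, inr⟧ S⟦inl, inl⟧ S⟦inl, inr⟧ S⟦inr, inl⟧ S⟦inr, inr⟧ T⟦inl, inl⟧) i j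
  · exact iff_of_eq <| congr_fun₂ (execR_assoc_offDiag R⟦inl, inr⟧ R⟦inr, inr⟧ S⟦inl, inl⟧
      S⟦inl, inr⟧ S⟦inr, inl⟧ S⟦inr, inr⟧ T⟦inl, inl⟧ T⟦inl, inr⟧) i j
  · exact iff_of_eq <| (congr_fun₂ (execR_assoc_offDiag T⟦inr, inl⟧ T⟦inl, inl⟧ S⟦inr, inr⟧
      S⟦inr, inl⟧ S⟦inl, inr⟧ S⟦inl, inl⟧ R⟦inr, inr⟧ R⟦inr, inl⟧) i j).symm
  · exact iff_of_eq <| (congr_fun₂ (execR_assoc_diag T⟦inr, inr⟧ T⟦inr, inl⟧ T⟦inl, inr⟧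
      T⟦inl, inl⟧ S⟦inr, inr⟧ S⟦inr, inl⟧ S⟦inl, inr⟧ S⟦inl, inl⟧ R⟦inr, inr⟧) i j).symm

end ExecAssoc

section Exit

variable {A B C : Type*}

/-- Where a token that enters `S` from the left at `b` leaves the composite: either through `S`
into `C`, or back through `S` into `B` and then through `R` into `A`. -/
def exitRel (R : A ⊕ B → A ⊕ B → Prop) (S : B ⊕ C → B ⊕ C → Prop) : B → A ⊕ C → Prop
  | b, .inl j => (S⟦inl, inl⟧ ∘r R⟦inr, inl⟧) b j
  | b, .inr c => S (.inl b) (.inr c)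

theorem execR_inl_iff (R : A ⊕ B → A ⊕ B → Prop) (S : B ⊕ C → B ⊕ C → Prop) (i : A)
    (y : A ⊕ C) :
    ExecR R S (.inl i) y ↔ (∃ j, y = .inl j ∧ R (.inl i) (.inl j)) ∨
      (R⟦inl, inr⟧ ∘r (S⟦inl, inl⟧ ∘r R⟦inr, inr⟧)∗ ∘r exitRel R S) i y := by
  rcases y with j | c
  · refine or_congr (by simp) (iff_of_eq ?_)
    exact congr_fun₂ (congrArg (R⟦inl, inr⟧ ∘r ·) (comp_reflTransGen_comp_assoc _ _ _)) i j
  · simp only [reduceCtorEq, false_and, exists_false, false_or]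
    rfl

theorem existsUnique_execR_graphRel_inl [Finite B] {f : A ⊕ B → A ⊕ B}
    {g : B ⊕ C → B ⊕ C} (hf : f.Injective) (hg : g.Injective) (i : A) :
    ∃! y, ExecR (graphRel f) (graphRel g) (.inl i) y := by
  simp only [execR_inl_iff]
  rcases hi : f (.inl i) with j | b₀
  · simp [graphRel, hi, Comp]
  set bounce := (graphRel g)⟦inl, inl⟧ ∘r (graphRel f)⟦inr, inr⟧
  set exit := exitRel (graphRel f) (graphRel g)
  have bounce_rightUnique : Relator.RightUnique bounce := by
    rintro b c c' ⟨u, hu, hc⟩ ⟨u', hu', hc'⟩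
    simp only [graphRel] at *
    grind
  have bounce_leftUnique : Relator.LeftUnique bounce := by
    rintro b b' c ⟨u, hu, hc⟩ ⟨u', hu', hc'⟩
    simp only [graphRel] at *
    grind [Function.Injective]
  have exit_rightUnique : Relator.RightUnique exit := by
    rintro b (j | c) (j' | c') hy hy' <;> simp only [exit, exitRel, graphRel, Comp] at * <;> grind
  have bounce_iff_not_exit (b : B) : (∃ b', bounce b b') ↔ ¬ ∃ y, exit b y := by
    rcases hb : g (inl b) with b' | c
    · rcases hb' : f (inr b') with j | b'' <;>
        simp [bounce, exit, exitRel, graphRel, Comp, Sum.exists, hb, hb']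
    · simp [bounce, exit, exitRel, graphRel, Comp, Sum.exists, hb]
  have not_bounce_start (b : B) : ¬ bounce b b₀ := by
    rintro ⟨u, hu, hb⟩
    simp only [graphRel] at *
    grind [Function.Injective]
  refine (existsUnique_congr fun y => ?_).mpr (existsUnique_reflTransGen_comp bounce_rightUnique
    bounce_leftUnique exit_rightUnique bounce_iff_not_exit not_bounce_start)
  simp [bounce, exit, graphRel, hi, Comp]

end Exit

section Converse

theorem flip_reflTransGen {α : Type*} (r : α → α → Prop) : flip r∗ = (flip r)∗ := by
  ext a b
  exact reflTransGen_swap.symm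

variable {A B C : Type*}

theorem flip_execR_diag (a : A → B → Prop) (s r : B → B → Prop) (b : B → A → Prop) :
    flip (a ∘r s ∘r (r ∘r s)∗ ∘r b) = flip b ∘r flip s ∘r (flip r ∘r flip s)∗ ∘r flip a := by
  simp only [flip_comp, flip_reflTransGen, comp_assoc, comp_reflTransGen_comp_assoc]

theorem flip_execR_offDiag (a : A → B → Prop) (s r : B → B → Prop) (c : B → C → Prop) :
    flip (a ∘r (s ∘r r)∗ ∘r c) = flip c ∘r (flip r ∘r flip s)∗ ∘r flip a := by
  simp only [flip_comp, flip_reflTransGen, comp_assoc]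

theorem flip_execR (R : A ⊕ B → A ⊕ B → Prop) (S : B ⊕ C → B ⊕ C → Prop) :
    flip (ExecR R S) = ExecR (flip R) (flip S) := by
  ext x y
  rcases x with i | i <;> rcases y with j | j
  · exact or_congr_right (iff_of_eq (congr_fun₂ (flip_execR_diag R⟦inl, inr⟧ S⟦inl, inl⟧
      R⟦inr, inr⟧ R⟦inr, inl⟧) i j))
  · exact iff_of_eq (congr_fun₂ (flip_execR_offDiag S⟦inr, inl⟧ R⟦inr, inr⟧ S⟦inl, inl⟧
      R⟦inr, inl⟧) i j)
  · exact iff_of_eq (congr_fun₂ (flip_execR_offDiag R⟦inl, inr⟧ S⟦inl, inl⟧ R⟦inr, inr⟧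
      S⟦inl, inr⟧) i j)
  · exact or_congr_right (iff_of_eq (congr_fun₂ (flip_execR_diag S⟦inr, inl⟧ R⟦inr, inr⟧
      S⟦inl, inl⟧ S⟦inl, inr⟧) i j))

end Converse

open scoped Function in
theorem execR_eq_onFun_swap {A B C : Type*} (R : A ⊕ B → A ⊕ B → Prop)
    (S : B ⊕ C → B ⊕ C → Prop) :
    ExecR R S = (ExecR (S on Sum.swap) (R on Sum.swap) on Sum.swap) := by
  ext x y
  rcases x with i | i <;> rcases y with j | j <;> rfl

open scoped Function in
theorem graphRel_onFun_swap {X Y : Type*} (f : X ⊕ Y → X ⊕ Y) :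
    (graphRel f on Sum.swap) = graphRel (Sum.swap ∘ f ∘ Sum.swap) := by
  ext x y
  simp only [Function.onFun, graphRel, Function.comp_apply]
  exact ⟨fun h => by rw [h, Sum.swap_swap], fun h => by rw [← h, Sum.swap_swap]⟩

theorem flip_graphRel {X : Type*} {f : X → X} (hf : f.Involutive) :
    flip (graphRel f) = graphRel f :=
  flip_eq_iff.2 (Function.symm_apply_eq_iff.2 hf)

theorem swap_comp_comp_swap_injective {X Y : Type*} {f : X ⊕ Y → X ⊕ Y} (hf : f.Injective) :
    (Sum.swap ∘ f ∘ Sum.swap).Injective :=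
  Sum.swap_leftInverse.injective.comp (hf.comp Sum.swap_leftInverse.injective)

theorem existsUnique_execR_graphRel {A B C : Type*} [Finite B] {f : A ⊕ B → A ⊕ B}
    {g : B ⊕ C → B ⊕ C} (hf : f.Injective) (hg : g.Injective) (x : A ⊕ C) :
    ∃! y, ExecR (graphRel f) (graphRel g) x y := by
  rcases x with i | c
  · exact existsUnique_execR_graphRel_inl hf hg i
  · rw [execR_eq_onFun_swap, graphRel_onFun_swap, graphRel_onFun_swap]
    exact (Equiv.sumComm _ _).existsUnique_congr_right.mpr
      (existsUnique_execR_graphRel_inl (swap_comp_comp_swap_injective hg)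
        (swap_comp_comp_swap_injective hf) c)

theorem graphRel_injective {X : Type*} : (graphRel : (X → X) → X → X → Prop).Injective :=
  fun f _ h => funext fun x => ((congr_fun₂ h x (f x)).mp rfl).symm

theorem graphRel_execFun {n m p : ℕ} {f : Fin n ⊕ Fin m → Fin n ⊕ Fin m}
    {g : Fin m ⊕ Fin p → Fin m ⊕ Fin p} (hf : f.Injective) (hg : g.Injective) :
    graphRel (execFun f g) = ExecR (graphRel f) (graphRel g) := by
  ext x y
  obtain ⟨y₀, hy₀, huniq⟩ := existsUnique_execR_graphRel hf hg x
  have hx : execFun f g x = y₀ := by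
    rw [execFun, dif_pos ⟨y₀, hy₀⟩]
    exact huniq _ (Exists.choose_spec _)
  exact ⟨fun h => h ▸ hx ▸ hy₀, fun hy => hx.trans (huniq y hy).symm⟩

theorem execFun_involutive {n m p : ℕ} {f : Fin n ⊕ Fin m → Fin n ⊕ Fin m}
    {g : Fin m ⊕ Fin p → Fin m ⊕ Fin p} (hf : f.Involutive) (hg : g.Involutive) :
    (execFun f g).Involutive := by
  refine Function.symm_apply_eq_iff.1 (flip_eq_iff.1 ?_)
  change flip (graphRel (execFun f g)) = graphRel (execFun f g)
  rw [graphRel_execFun hf.injective hg.injective, flip_execR, flip_graphRel hf, flip_graphRel hg]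

/-- The execution-formula composition of planar involutions is associative:
for `f ∈ P(n,m)`, `g ∈ P(m,p)`, `h ∈ P(p,q)`, `(f;g);h = f;(g;h)`. -/
theorem stmt_8 (n m p q : ℕ) (f : Fin n ⊕ Fin m → Fin n ⊕ Fin m)
    (g : Fin m ⊕ Fin p → Fin m ⊕ Fin p) (h : Fin p ⊕ Fin q → Fin p ⊕ Fin q)
    (hf : Planar f) (hg : Planar g) (hh : Planar h) :
    execFun (execFun f g) h = execFun f (execFun g h) := by
  have hfg := execFun_involutive hf.1.1 hg.1.1
  have hgh := execFun_involutive hg.1.1 hh.1.1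
  apply graphRel_injective
  rw [graphRel_execFun hfg.injective hh.1.1.injective,
    graphRel_execFun hf.1.1.injective hgh.injective,
    graphRel_execFun hf.1.1.injective hg.1.1.injective,
    graphRel_execFun hg.1.1.injective hh.1.1.injective, execR_assoc]
end

section
/- The twist involution τ_n on [n] + [n], given by i ↔ i', is a two-sided identity for the execution-formula composition: for any planar involution f ∈ P(n,m), τ_n ; f = f and f ; τ_m = f. -/
open Sum Relation

lemma rtg_false {α : Type*} {r : α → α → Prop} (hr : ∀ a b, ¬ r a b) {a b : α}
    (h : Relation.ReflTransGen r a b) : a = b := by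
  induction h with
  | refl => rfl
  | tail _ h ih => exact absurd h (hr _ _)

lemma execR_left {n m : ℕ} (f : Fin n ⊕ Fin m → Fin n ⊕ Fin m) (x y : Fin n ⊕ Fin m) :
    ExecR (graphRel (Sum.swap : Fin n ⊕ Fin n → Fin n ⊕ Fin n)) (graphRel f) x y ↔ f x = y := by
  have hbot : ∀ (a b : Fin n), ¬ (Relation.Comp
      (fun i j => graphRel (Sum.swap : Fin n ⊕ Fin n → Fin n ⊕ Fin n) (Sum.inr i) (Sum.inr j))
      (fun i j => graphRel f (Sum.inl i) (Sum.inl j)) a b) := by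
    rintro a b ⟨c, hc, -⟩; simp [graphRel] at hc
  cases x with
  | inl i =>
    cases y with
    | inl j =>
      simp only [ExecR, graphRel, Relation.Comp]
      constructor
      · rintro (h | ⟨b, hb, c, hc, d, hd, hdj⟩)
        · simp at h
        · simp only [Sum.swap_inl, Sum.inr.injEq] at hb
          subst hb
          have := rtg_false hbot hd
          subst this
          simp only [Sum.swap_inr, Sum.inl.injEq] at hdj
          subst hdj; exact hc
      · intro h
        exact Or.inr ⟨i, rfl, j, h, j, Relation.ReflTransGen.refl, rfl⟩
    | inr j =>
      simp only [ExecR, graphRel, Relation.Comp]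
      constructor
      · rintro ⟨b, hb, c, hc, hcj⟩
        simp only [Sum.swap_inl, Sum.inr.injEq] at hb
        subst hb
        have : i = c := by
          refine rtg_false ?_ hc
          rintro a b ⟨d, hd, he⟩; simp at he
        subst this; exact hcj
      · intro h
        exact ⟨i, rfl, i, Relation.ReflTransGen.refl, h⟩
  | inr i =>
    cases y with
    | inl j =>
      simp only [ExecR, graphRel, Relation.Comp]
      constructor
      · rintro ⟨b, hb, c, hc, hcj⟩
        have := rtg_false hbot hc
        subst this
        simp only [Sum.swap_inr, Sum.inl.injEq] at hcj
        subst hcj; exact hb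
      · intro h
        exact ⟨j, h, j, Relation.ReflTransGen.refl, rfl⟩
    | inr j =>
      simp only [ExecR, graphRel, Relation.Comp]
      constructor
      · rintro (h | ⟨b, hb, c, hc, _⟩)
        · exact h
        · simp at hc
      · exact Or.inl

lemma execR_right {n m : ℕ} (f : Fin n ⊕ Fin m → Fin n ⊕ Fin m) (x y : Fin n ⊕ Fin m) :
    ExecR (graphRel f) (graphRel (Sum.swap : Fin m ⊕ Fin m → Fin m ⊕ Fin m)) x y ↔ f x = y := by
  cases x with
  | inl i =>
    cases y with
    | inl j =>
      simp only [ExecR, graphRel, Relation.Comp]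
      constructor
      · rintro (h | ⟨b, hb, c, hc, _⟩)
        · exact h
        · simp at hc
      · exact Or.inl
    | inr j =>
      simp only [ExecR, graphRel, Relation.Comp]
      constructor
      · rintro ⟨b, hb, c, hc, hcj⟩
        have : b = c := by
          refine rtg_false ?_ hc
          rintro a b ⟨d, hd, he⟩; simp at hd
        subst this
        simp only [Sum.swap_inl, Sum.inr.injEq] at hcj
        subst hcj; exact hb
      · intro h
        exact ⟨j, h, j, Relation.ReflTransGen.refl, rfl⟩
  | inr i =>
    cases y with
    | inl j =>
      simp only [ExecR, graphRel, Relation.Comp]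
      constructor
      · rintro ⟨b, hb, c, hc, hcj⟩
        simp only [Sum.swap_inr, Sum.inl.injEq] at hb
        subst hb
        have : i = c := by
          refine rtg_false ?_ hc
          rintro a b ⟨d, hd, he⟩; simp at he
        subst this; exact hcj
      · intro h
        exact ⟨i, rfl, i, Relation.ReflTransGen.refl, h⟩
    | inr j =>
      simp only [ExecR, graphRel, Relation.Comp]
      constructor
      · rintro (h | ⟨b, hb, c, hc, d, hd, hdj⟩)
        · simp at h
        · simp only [Sum.swap_inr, Sum.inl.injEq] at hb
          subst hb
          have : c = d := by
            refine rtg_false ?_ hd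
            rintro a b ⟨e, he, -⟩; simp at he
          subst this
          simp only [Sum.swap_inl, Sum.inr.injEq] at hdj
          subst hdj; exact hc
      · intro h
        exact Or.inr ⟨i, rfl, j, h, j, Relation.ReflTransGen.refl, rfl⟩

lemma execFun_eq_of_iff {n m p : ℕ} (f : Fin n ⊕ Fin m → Fin n ⊕ Fin m)
    (g : Fin m ⊕ Fin p → Fin m ⊕ Fin p) (h : Fin n ⊕ Fin p → Fin n ⊕ Fin p)
    (H : ∀ x y, ExecR (graphRel f) (graphRel g) x y ↔ h x = y) :
    execFun f g = h := by
  funext x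
  have hex : ∃ y, ExecR (graphRel f) (graphRel g) x y := ⟨h x, (H x _).mpr rfl⟩
  unfold execFun
  rw [dif_pos hex]
  exact ((H x _).mp hex.choose_spec).symm

/-- The twist involution `τ_n` on `[n] + [n]` (pairing `i ↔ i'`, i.e.
`Sum.swap`) is a two-sided identity for the execution-formula composition:
for any planar involution `f ∈ P(n,m)`, `τ_n ; f = f` and `f ; τ_m = f`. -/
theorem stmt_9 (n m : ℕ) (f : Fin n ⊕ Fin m → Fin n ⊕ Fin m) (hf : Planar f) :
    execFun (Sum.swap : Fin n ⊕ Fin n → Fin n ⊕ Fin n) f = f ∧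
    execFun f (Sum.swap : Fin m ⊕ Fin m → Fin m ⊕ Fin m) = f := by
  exact ⟨execFun_eq_of_iff _ _ _ (execR_left f), execFun_eq_of_iff _ _ _ (execR_right f)⟩
end
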